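/- arXiv:2409.00624 — 7 statements merged into one kernel-verified Lean document; each statement's English description precedes it below -/
import Mathlib

section
/- Let S_n denote the number of subsets S of {1,…,n} such that no two elements of S differ by 1 or by 4 (i.e., with disallowed-differences set Q = {1,4}), with S_0 = 1. Then in the ring of formal power series ℤ[[x]], (∑_{n≥0} S_n x^n)·(1 − x − x^3 + x^4 − 2x^5 + x^6 − x^7) = 1 + x + x^2 + x^3 + 2x^4 + x^6. -/
/-- `restrictedCount Q n` is the number of subsets of `{1,…,n}` in which no two
elements differ by an element of `Q`. -/
def restrictedCount (Q : Finset ℕ) (n : ℕ) : ℕ :=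
  ((Finset.Icc 1 n).powerset.filter
    fun s => ∀ a ∈ s, ∀ b ∈ s, b < a → a - b ∉ Q).card

/-!
Transfer matrix. An admissible subset of `{1,…,n}` extends by `n + 1` exactly when it avoids
`n` and `n - 3`, so the admissible sets counted by their membership pattern on `n, n-1, n-2, n-3`
obey a linear recursion in sixteen counts. Unrolling it seven steps, the order-7 recurrence
`S (n+7) = S (n+6) + S (n+4) - S (n+3) + 2 S (n+2) - S (n+1) + S n` holds identically in the
sixteen counts at `n`. Together with `S 0, …, S 6 = 1, 2, 3, 5, 8, 11, 17` this is the
coefficientwise form of the power series identity.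
-/

open Finset

def IsAdmissible (Q s : Finset ℕ) : Prop :=
  ∀ a ∈ s, ∀ b ∈ s, b < a → a - b ∉ Q

instance (Q : Finset ℕ) : DecidablePred (IsAdmissible Q) := fun s =>
  inferInstanceAs (Decidable (∀ a ∈ s, ∀ b ∈ s, b < a → a - b ∉ Q))

lemma restrictedCount_eq_card_isAdmissible (Q : Finset ℕ) (n : ℕ) :
    restrictedCount Q n = #{s ∈ (Icc 1 n).powerset | IsAdmissible Q s} :=
  rfl

lemma isAdmissible_insert_iff {Q s : Finset ℕ} {m : ℕ} (hs : ∀ b ∈ s, b < m) :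
    IsAdmissible Q (insert m s) ↔ IsAdmissible Q s ∧ ∀ b ∈ s, m - b ∉ Q := by
  constructor
  · intro h
    exact ⟨fun a ha b hb => h a (mem_insert_of_mem ha) b (mem_insert_of_mem hb),
      fun b hb => h m (mem_insert_self m s) b (mem_insert_of_mem hb) (hs b hb)⟩
  · rintro ⟨h, hm⟩ a ha b hb hba
    rw [mem_insert] at ha hb
    rcases ha with rfl | ha <;> rcases hb with rfl | hb
    · exact absurd hba (lt_irrefl _)
    · exact hm b hb
    · exact absurd (hs a ha) (not_lt.2 hba.le)
    · exact h a ha b hb hba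

lemma card_filter_powerset_Icc_succ (p : Finset ℕ → Prop) [DecidablePred p] (n : ℕ) :
    #{s ∈ (Icc 1 (n + 1)).powerset | p s} =
      #{s ∈ (Icc 1 n).powerset | p s} + #{s ∈ (Icc 1 n).powerset | p (insert (n + 1) s)} := by
  rw [← insert_Icc_right_eq_Icc_add_one (by omega)]
  simp only [card_filter]
  exact sum_powerset_insert (by simp) _

lemma isAdmissible_one_four_insert_iff {s : Finset ℕ} {n : ℕ} (hs : s ⊆ Icc 1 n) :
    IsAdmissible {1, 4} (insert (n + 1) s) ↔ IsAdmissible {1, 4} s ∧ n ∉ s ∧ n - 3 ∉ s := by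
  have hmem : ∀ b ∈ s, 1 ≤ b ∧ b ≤ n := fun b hb => mem_Icc.1 (hs hb)
  rw [isAdmissible_insert_iff fun b hb => by have := hmem b hb; omega]
  refine and_congr_right fun _ => ⟨fun h => ⟨fun hn => ?_, fun hn => ?_⟩, ?_⟩
  · exact h n hn (by simp)
  · have := hmem _ hn
    exact h _ hn (by simp only [mem_insert, mem_singleton]; omega)
  · rintro ⟨hn, hn3⟩ b hb hQ
    have := hmem b hb
    simp only [mem_insert, mem_singleton] at hQ
    rcases hQ with hQ | hQ
    · exact hn (by rwa [show n = b by omega])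
    · exact hn3 (by rwa [show n - 3 = b by omega])

-- For `n < 3` the truncated `n - k` is `0`, which lies in no `s ⊆ Icc 1 n`.
def tailPattern (n : ℕ) (s : Finset ℕ) : Bool × Bool × Bool × Bool :=
  (n ∈ s, n - 1 ∈ s, n - 2 ∈ s, n - 3 ∈ s)

def tailCount (n : ℕ) (p : Bool × Bool × Bool × Bool) : ℕ :=
  #{s ∈ (Icc 1 n).powerset | IsAdmissible {1, 4} s ∧ tailPattern n s = p}

lemma restrictedCount_eq_sum_tailCount (n : ℕ) :
    restrictedCount {1, 4} n = ∑ p, tailCount n p := by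
  rw [restrictedCount_eq_card_isAdmissible,
    card_eq_sum_card_fiberwise (f := tailPattern n) (t := univ) fun _ _ => mem_univ _]
  simp only [tailCount, filter_filter]

lemma tailPattern_succ {n : ℕ} {s : Finset ℕ} (hs : s ⊆ Icc 1 n) :
    tailPattern (n + 1) s = (false, decide (n ∈ s), decide (n - 1 ∈ s), decide (n - 2 ∈ s)) := by
  have : n + 1 ∉ s := fun h => by simpa using hs h
  simp [tailPattern, this, show n + 1 - 2 = n - 1 by omega, show n + 1 - 3 = n - 2 by omega]

lemma tailPattern_succ_insert (n : ℕ) (s : Finset ℕ) :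
    tailPattern (n + 1) (insert (n + 1) s) =
      (true, decide (n ∈ s), decide (n - 1 ∈ s), decide (n - 2 ∈ s)) := by
  simp [tailPattern, show n + 1 - 2 = n - 1 by omega, show n + 1 - 3 = n - 2 by omega,
    show n - 2 ≠ n + 1 by omega]

lemma tailCount_succ (n : ℕ) (p : Bool × Bool × Bool × Bool) :
    tailCount (n + 1) p =
      #{s ∈ (Icc 1 n).powerset | IsAdmissible {1, 4} s ∧
          (false, decide (n ∈ s), decide (n - 1 ∈ s), decide (n - 2 ∈ s)) = p} +
      #{s ∈ (Icc 1 n).powerset | (IsAdmissible {1, 4} s ∧ n ∉ s ∧ n - 3 ∉ s) ∧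
          (true, decide (n ∈ s), decide (n - 1 ∈ s), decide (n - 2 ∈ s)) = p} := by
  rw [tailCount, card_filter_powerset_Icc_succ]
  congr 1 <;> congr 1 <;> refine filter_congr fun s hs => ?_ <;> rw [mem_powerset] at hs
  · rw [tailPattern_succ hs]
  · rw [tailPattern_succ_insert, isAdmissible_one_four_insert_iff hs]

lemma tailCount_succ_false (n : ℕ) (b c d : Bool) :
    tailCount (n + 1) (false, b, c, d) =
      tailCount n (b, c, d, true) + tailCount n (b, c, d, false) := by
  rw [tailCount_succ]
  simp only [Prod.mk.injEq, Bool.true_eq_false, false_and, and_false, filter_false, card_empty,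
    add_zero, true_and]
  rw [← card_filter_add_card_filter_not (fun s => n - 3 ∈ s), filter_filter, filter_filter]
  congr 2 <;> refine filter_congr fun s _ => ?_ <;> simp [tailPattern, and_assoc]

lemma tailCount_succ_true_true (n : ℕ) (c d : Bool) :
    tailCount (n + 1) (true, true, c, d) = 0 := by
  rw [tailCount_succ]
  simp +contextual

lemma tailCount_succ_true_false (n : ℕ) (c d : Bool) :
    tailCount (n + 1) (true, false, c, d) = tailCount n (false, c, d, false) := by
  rw [tailCount_succ]
  simp only [Prod.mk.injEq, Bool.false_eq_true, false_and, and_false, filter_false, card_empty,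
    zero_add, true_and]
  congr 1
  refine filter_congr fun s _ => ?_
  simp only [tailPattern, Prod.mk.injEq, decide_eq_false_iff_not]
  tauto

lemma restrictedCount_recurrence (n : ℕ) :
    restrictedCount {1, 4} (n + 7) + restrictedCount {1, 4} (n + 3) +
        restrictedCount {1, 4} (n + 1) =
      restrictedCount {1, 4} (n + 6) + restrictedCount {1, 4} (n + 4) +
        2 * restrictedCount {1, 4} (n + 2) + restrictedCount {1, 4} n := by
  simp only [restrictedCount_eq_sum_tailCount, Fintype.sum_prod_type, Fintype.sum_bool,
    tailCount_succ_false, tailCount_succ_true_true, tailCount_succ_true_false]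
  ring

open PowerSeries in
/-- generating function for `S^{{1,4}}_n`. -/
theorem stmt_3 :
    (PowerSeries.mk fun n => (restrictedCount {1, 4} n : ℤ)) *
        (1 - PowerSeries.X - PowerSeries.X ^ 3 + PowerSeries.X ^ 4 -
          2 * PowerSeries.X ^ 5 + PowerSeries.X ^ 6 - PowerSeries.X ^ 7) =
      1 + PowerSeries.X + PowerSeries.X ^ 2 + PowerSeries.X ^ 3 +
        2 * PowerSeries.X ^ 4 + PowerSeries.X ^ 6 := by
  set F := PowerSeries.mk fun n => (restrictedCount {1, 4} n : ℤ) with hF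
  ext n
  simp only [two_mul, mul_sub, mul_add, mul_one, map_sub, map_add]
  obtain hn | ⟨m, rfl⟩ : n < 7 ∨ ∃ m, n = m + 7 := by
    rcases lt_or_ge n 7 with h | h
    exacts [.inl h, .inr ⟨n - 7, by omega⟩]
  · interval_cases n <;>
      simp only [coeff_mul_X_pow', coeff_zero_mul_X, coeff_succ_mul_X, coeff_X_pow, coeff_X,
        coeff_one, hF, coeff_mk] <;>
      decide
  · simp only [coeff_mul_X_pow', coeff_succ_mul_X, coeff_X_pow, coeff_X, coeff_one]
    simp only [hF, coeff_mk, Nat.reduceSubDiff, Nat.add_sub_cancel]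
    have := restrictedCount_recurrence m
    omega
end

section
/- Let m ≥ 2 and n ≥ 0 and k ≥ 0 be integers. The number of k-element subsets S of {1,…,n} such that no two elements of S differ by an element of Q = {1, m} equals the number of permutations π of {1,…,n+1} with the following two properties: (a) there exist k pairwise disjoint pairs {i, i+1} ⊆ {1,…,n+1} such that π exchanges the two elements of each pair (π(i) = i+1 and π(i+1) = i) and π fixes every element not belonging to one of the k pairs; (b) for every i with 1 ≤ i ≤ n+2−m, (max over j = 0,…,m−1 of π(i+j)) − (min over j = 0,…,m−1 of π(i+j)) ≤ m. -/
/-- `restrictedCountK Q n k` is the number of `k`-element subsets of `{1,…,n}` in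
which no two elements differ by an element of `Q`. -/
def restrictedCountK (Q : Finset ℕ) (n k : ℕ) : ℕ :=
  ((Finset.Icc 1 n).powerset.filter
    fun s => s.card = k ∧ ∀ a ∈ s, ∀ b ∈ s, b < a → a - b ∉ Q).card

/-!
A set `S ⊆ {1,…,n}` without two consecutive elements corresponds to the involution of
`{1,…,n+1}` exchanging `a` and `a + 1` for every `a ∈ S`, and `S` is read back from the
involution as its set of points `a` sent to `a + 1`. Every value of this involution lies
within one of its argument, so a window `b+1, …, b+m` of `m` consecutive positions has
spread at most `m + 1`, and `m + 1` is attained exactly when both `b` and `b + m` lie in `S`: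
then `b + 1 ↦ b` and `b + m ↦ b + m + 1`. Hence the window condition on the permutation is
the condition that no two elements of `S` differ by `m`.
-/

open Finset

section AdjSwap

variable {S : Finset ℕ}

def adjSwapFun (S : Finset ℕ) (x : ℕ) : ℕ :=
  if x ∈ S then x + 1 else if x - 1 ∈ S then x - 1 else x

lemma adjSwapFun_involutive (hS : ∀ a ∈ S, a + 1 ∉ S) : Function.Involutive (adjSwapFun S) := by
  intro x
  by_cases hx : x ∈ S
  · simp [adjSwapFun, hx, hS x hx]
  by_cases hx1 : x - 1 ∈ S
  · obtain ⟨y, rfl⟩ : ∃ y, x = y + 1 := ⟨x - 1, by rcases x with _ | x <;> simp_all⟩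
    simp_all [adjSwapFun]
  · simp [adjSwapFun, hx, hx1]

def adjSwap (S : Finset ℕ) (hS : ∀ a ∈ S, a + 1 ∉ S) : Equiv.Perm ℕ :=
  (adjSwapFun_involutive hS).toPerm

variable (hS : ∀ a ∈ S, a + 1 ∉ S)
lemma adjSwap_apply (x : ℕ) : adjSwap S hS x = adjSwapFun S x := rfl

lemma adjSwap_apply_of_mem {a : ℕ} (ha : a ∈ S) : adjSwap S hS a = a + 1 := by
  simp [adjSwap_apply, adjSwapFun, ha]

lemma adjSwap_apply_add_one_of_mem {a : ℕ} (ha : a ∈ S) : adjSwap S hS (a + 1) = a := by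
  simp [adjSwap_apply, adjSwapFun, ha, hS a ha]

lemma adjSwap_apply_of_forall_ne {x : ℕ} (hx : ∀ a ∈ S, x ≠ a ∧ x ≠ a + 1) :
    adjSwap S hS x = x := by
  have hxS : x ∉ S := fun h => (hx x h).1 rfl
  have hx1 : x - 1 ∉ S := fun h => by
    rcases x with _ | x
    · exact hxS h
    · exact (hx x (by simpa using h)).2 rfl
  simp [adjSwap_apply, adjSwapFun, hxS, hx1]

lemma adjSwap_apply_le (x : ℕ) : adjSwap S hS x ≤ x + 1 := by
  rw [adjSwap_apply, adjSwapFun]; split_ifs <;> omega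

lemma sub_one_le_adjSwap_apply (x : ℕ) : x - 1 ≤ adjSwap S hS x := by
  rw [adjSwap_apply, adjSwapFun]; split_ifs <;> omega

lemma adjSwap_apply_le_of_notMem {x : ℕ} (hx : x ∉ S) : adjSwap S hS x ≤ x := by
  rw [adjSwap_apply, adjSwapFun, if_neg hx]; split_ifs <;> omega

lemma le_adjSwap_apply_add_one {b : ℕ} (hb : b ∉ S) : b + 1 ≤ adjSwap S hS (b + 1) := by
  rw [adjSwap_apply, adjSwapFun]; split_ifs <;> simp_all

lemma adjSwap_apply_eq_add_one_iff {x : ℕ} : adjSwap S hS x = x + 1 ↔ x ∈ S := by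
  refine ⟨fun h => ?_, adjSwap_apply_of_mem hS⟩
  by_contra hx
  have := adjSwap_apply_le_of_notMem hS hx
  omega

lemma adjSwap_injective {T : Finset ℕ} {hS : ∀ a ∈ S, a + 1 ∉ S} {hT : ∀ a ∈ T, a + 1 ∉ T}
    (h : adjSwap S hS = adjSwap T hT) : S = T := by
  ext x
  rw [← adjSwap_apply_eq_add_one_iff hS, ← adjSwap_apply_eq_add_one_iff hT, h]

lemma eq_adjSwap_of_forall {π : Equiv.Perm ℕ} (hswap : ∀ a ∈ S, π a = a + 1 ∧ π (a + 1) = a)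
    (hfix : ∀ x, (∀ a ∈ S, x ≠ a ∧ x ≠ a + 1) → π x = x) : π = adjSwap S hS := by
  ext x
  by_cases hx : ∀ a ∈ S, x ≠ a ∧ x ≠ a + 1
  · rw [hfix x hx, adjSwap_apply_of_forall_ne hS hx]
  simp only [not_forall, not_and_or, not_not] at hx
  obtain ⟨a, ha, hxa | hxa⟩ := hx <;> subst x
  · rw [(hswap a ha).1, adjSwap_apply_of_mem hS ha]
  · rw [(hswap a ha).2, adjSwap_apply_add_one_of_mem hS ha]

lemma adjSwap_window_spread_le_iff {m : ℕ} (h : (range m).Nonempty) (b : ℕ) :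
    (range m).sup' h (fun j => adjSwap S hS (b + 1 + j)) -
        (range m).inf' h (fun j => adjSwap S hS (b + 1 + j)) ≤ m ↔
      ¬ (b ∈ S ∧ b + m ∈ S) := by
  have hm : 0 < m := Nat.pos_of_ne_zero (nonempty_range_iff.1 h)
  constructor
  · rintro hle ⟨hb, hbm⟩
    have hinf : (range m).inf' h (fun j => adjSwap S hS (b + 1 + j)) ≤ b :=
      (inf'_le _ (mem_range.2 hm)).trans_eq (adjSwap_apply_add_one_of_mem hS hb)
    have hsup : b + m + 1 ≤ (range m).sup' h (fun j => adjSwap S hS (b + 1 + j)) := by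
      refine le_sup'_of_le _ (mem_range.2 (Nat.sub_lt hm one_pos)) ?_
      rw [show b + 1 + (m - 1) = b + m by omega, adjSwap_apply_of_mem hS hbm]
    omega
  · intro hbad
    by_cases hb : b ∈ S
    · have hbm : b + m ∉ S := fun h => hbad ⟨hb, h⟩
      have hsup : (range m).sup' h (fun j => adjSwap S hS (b + 1 + j)) ≤ b + m := by
        refine sup'_le_iff _ _ |>.2 fun j hj => ?_
        rw [mem_range] at hj
        rcases (show j = m - 1 ∨ j < m - 1 by omega) with rfl | hj
        · rw [show b + 1 + (m - 1) = b + m by omega]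
          exact adjSwap_apply_le_of_notMem hS hbm
        · have := adjSwap_apply_le hS (b + 1 + j)
          omega
      have hinf : b ≤ (range m).inf' h (fun j => adjSwap S hS (b + 1 + j)) :=
        le_inf'_iff _ _ |>.2 fun j _ => by
          have := sub_one_le_adjSwap_apply hS (b + 1 + j)
          omega
      omega
    · have hsup : (range m).sup' h (fun j => adjSwap S hS (b + 1 + j)) ≤ b + m + 1 :=
        sup'_le_iff _ _ |>.2 fun j hj => by
          have := adjSwap_apply_le hS (b + 1 + j)
          rw [mem_range] at hj
          omega
      have hinf : b + 1 ≤ (range m).inf' h (fun j => adjSwap S hS (b + 1 + j)) := by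
        refine le_inf'_iff _ _ |>.2 fun j _ => ?_
        rcases j with _ | j
        · exact le_adjSwap_apply_add_one hS hb
        · have := sub_one_le_adjSwap_apply hS (b + 1 + (j + 1))
          omega
      omega

end AdjSwap

def avoidingSets (Q : Finset ℕ) (n k : ℕ) : Finset (Finset ℕ) :=
  (Icc 1 n).powerset.filter fun s => s.card = k ∧ ∀ a ∈ s, ∀ b ∈ s, b < a → a - b ∉ Q

lemma forall_sub_notMem_iff {s Q : Finset ℕ} (hQ : 0 ∉ Q) :
    (∀ a ∈ s, ∀ b ∈ s, b < a → a - b ∉ Q) ↔ ∀ b ∈ s, ∀ d ∈ Q, b + d ∉ s := by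
  constructor
  · intro h b hb d hd hbd
    have hd0 : d ≠ 0 := by rintro rfl; exact hQ hd
    exact h (b + d) hbd b hb (by omega) (by simpa using hd)
  · intro h a ha b hb hba hab
    exact h b hb (a - b) hab (by rwa [Nat.add_sub_cancel' hba.le])

lemma mem_avoidingSets_pair_iff {m n k : ℕ} (hm : 0 < m) {s : Finset ℕ} :
    s ∈ avoidingSets {1, m} n k ↔
      s ⊆ Icc 1 n ∧ s.card = k ∧ (∀ a ∈ s, a + 1 ∉ s) ∧ ∀ a ∈ s, a + m ∉ s := by
  have h0 : 0 ∉ ({1, m} : Finset ℕ) := by simp; omega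
  rw [avoidingSets, mem_filter, mem_powerset, forall_sub_notMem_iff h0]
  simp only [mem_insert, mem_singleton, forall_eq_or_imp, forall_eq]
  constructor
  · rintro ⟨hsub, hcard, h⟩
    exact ⟨hsub, hcard, fun a ha => (h a ha).1, fun a ha => (h a ha).2⟩
  · rintro ⟨hsub, hcard, h1, hgap⟩
    exact ⟨hsub, hcard, fun a ha => ⟨h1 a ha, hgap a ha⟩⟩

def WindowSpreadLE (m n : ℕ) (hm : 0 < m) (π : Equiv.Perm ℕ) : Prop :=
  ∀ i : ℕ, 1 ≤ i → i ≤ n + 2 - m →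
    (Finset.range m).sup' (Finset.nonempty_range_iff.mpr (by omega)) (fun j => π (i + j)) -
      (Finset.range m).inf' (Finset.nonempty_range_iff.mpr (by omega)) (fun j => π (i + j)) ≤ m

def IsWindowedSwapPerm (m n k : ℕ) (hm : 0 < m) (π : Equiv.Perm ℕ) : Prop :=
  (∀ x : ℕ, x ∉ Finset.Icc 1 (n + 1) → π x = x) ∧
  (∃ T : Finset ℕ, T.card = k ∧
    (∀ i ∈ T, 1 ≤ i ∧ i + 1 ≤ n + 1) ∧
    (∀ i ∈ T, ∀ j ∈ T, i < j → i + 1 < j) ∧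
    (∀ i ∈ T, π i = i + 1 ∧ π (i + 1) = i) ∧
    (∀ x : ℕ, 1 ≤ x → x ≤ n + 1 → (∀ i ∈ T, x ≠ i ∧ x ≠ i + 1) → π x = x)) ∧
  WindowSpreadLE m n hm π

section Perm

variable {m n k : ℕ} (hm : 0 < m)

lemma windowSpreadLE_adjSwap_iff {S : Finset ℕ} (hS : ∀ a ∈ S, a + 1 ∉ S)
    (hsub : S ⊆ Icc 1 n) : WindowSpreadLE m n hm (adjSwap S hS) ↔ ∀ b ∈ S, b + m ∉ S := by
  constructor
  · intro hw b hb hbm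
    have hbm' := mem_Icc.1 (hsub hbm)
    exact (adjSwap_window_spread_le_iff hS _ b).1 (hw (b + 1) (by omega) (by omega)) ⟨hb, hbm⟩
  · intro h i hi _
    obtain ⟨b, rfl⟩ : ∃ b, i = b + 1 := ⟨i - 1, by omega⟩
    exact (adjSwap_window_spread_le_iff hS _ b).2 fun ⟨hb, hbm⟩ => h b hb hbm

lemma isWindowedSwapPerm_adjSwap {S : Finset ℕ} (hS : ∀ a ∈ S, a + 1 ∉ S) (hsub : S ⊆ Icc 1 n)
    (hcard : S.card = k) (hgap : ∀ a ∈ S, a + m ∉ S) :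
    IsWindowedSwapPerm m n k hm (adjSwap S hS) := by
  have hS' : ∀ i ∈ S, 1 ≤ i ∧ i ≤ n := fun i hi => mem_Icc.1 (hsub hi)
  refine ⟨fun x hx => adjSwap_apply_of_forall_ne hS fun a ha => ?_,
    ⟨S, hcard, fun i hi => ?_, fun i hi j hj hij => ?_,
      fun i hi => ⟨adjSwap_apply_of_mem hS hi, adjSwap_apply_add_one_of_mem hS hi⟩,
      fun x _ _ hx => adjSwap_apply_of_forall_ne hS hx⟩,
    (windowSpreadLE_adjSwap_iff hm hS hsub).2 hgap⟩
  · have := hS' a ha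
    rw [mem_Icc] at hx
    omega
  · have := hS' i hi
    omega
  · have : j ≠ i + 1 := by rintro rfl; exact hS i hi hj
    omega

lemma IsWindowedSwapPerm.exists_eq_adjSwap {π : Equiv.Perm ℕ} (h : IsWindowedSwapPerm m n k hm π) :
    ∃ T, ∃ hT : ∀ a ∈ T, a + 1 ∉ T,
      T ⊆ Icc 1 n ∧ T.card = k ∧ (∀ a ∈ T, a + m ∉ T) ∧ π = adjSwap T hT := by
  obtain ⟨hout, ⟨T, hcard, hbound, hdisj, hswap, hfix⟩, hwin⟩ := h
  have hT : ∀ a ∈ T, a + 1 ∉ T := fun a ha ha1 => by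
    have := hdisj a ha (a + 1) ha1 (by omega)
    omega
  have hsub : T ⊆ Icc 1 n := fun i hi => by
    have := hbound i hi
    rw [mem_Icc]
    omega
  have hπ : π = adjSwap T hT := by
    refine eq_adjSwap_of_forall hT hswap fun x hx => ?_
    by_cases hxI : x ∈ Icc 1 (n + 1)
    · rw [mem_Icc] at hxI
      exact hfix x hxI.1 hxI.2 hx
    · exact hout x hxI
  subst hπ
  exact ⟨T, hT, hsub, hcard, (windowSpreadLE_adjSwap_iff hm hT hsub).1 hwin, rfl⟩

theorem card_avoidingSets_pair :
    (avoidingSets {1, m} n k).card = Nat.card {π // IsWindowedSwapPerm m n k hm π} := by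
  rw [← Nat.card_eq_finsetCard]
  refine Nat.card_eq_of_bijective
    (fun s => ⟨adjSwap s.1 ((mem_avoidingSets_pair_iff hm).1 s.2).2.2.1, ?_⟩) ⟨?_, ?_⟩
  · obtain ⟨hsub, hcard, hS, hgap⟩ := (mem_avoidingSets_pair_iff hm).1 s.2
    exact isWindowedSwapPerm_adjSwap hm hS hsub hcard hgap
  · intro s t hst
    exact Subtype.ext (adjSwap_injective (Subtype.mk.inj hst))
  · rintro ⟨π, hπ⟩
    obtain ⟨T, hT, hsub, hcard, hgap, rfl⟩ := hπ.exists_eq_adjSwap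
    exact ⟨⟨T, (mem_avoidingSets_pair_iff hm).2 ⟨hsub, hcard, hT, hgap⟩⟩, rfl⟩

end Perm

/-- bijection between `k`-subsets of `{1,…,n}` avoiding differences in
`{1,m}` and permutations of `{1,…,n+1}` consisting of `k` disjoint adjacent
transpositions, such that any `m` consecutive values differ by at most `m`. -/
theorem stmt_5 (m n k : ℕ) (hm : 2 ≤ m) :
    restrictedCountK {1, m} n k =
      Nat.card {π : Equiv.Perm ℕ //
        (∀ x : ℕ, x ∉ Finset.Icc 1 (n + 1) → π x = x) ∧
        (∃ T : Finset ℕ, T.card = k ∧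
          (∀ i ∈ T, 1 ≤ i ∧ i + 1 ≤ n + 1) ∧
          (∀ i ∈ T, ∀ j ∈ T, i < j → i + 1 < j) ∧
          (∀ i ∈ T, π i = i + 1 ∧ π (i + 1) = i) ∧
          (∀ x : ℕ, 1 ≤ x → x ≤ n + 1 → (∀ i ∈ T, x ≠ i ∧ x ≠ i + 1) → π x = x)) ∧
        (∀ i : ℕ, 1 ≤ i → i ≤ n + 2 - m →
          (Finset.range m).sup' (Finset.nonempty_range_iff.mpr (by omega))
              (fun j => π (i + j)) -
            (Finset.range m).inf' (Finset.nonempty_range_iff.mpr (by omega))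
              (fun j => π (i + j)) ≤ m)} :=
  card_avoidingSets_pair (m := m) (n := n) (k := k) (by omega)
end

section
/- Let j ≥ 1, m ≥ 1, n ≥ 0 and k ≥ 0 be integers. The number of k-element subsets S of {1,…,n} such that no two elements of S differ by an element of Q = {m, 2m, …, jm} equals the number of permutations π of {1,…,n+jm} satisfying π(i) − i ∈ {−m, 0, jm} for all i ∈ {1,…,n+jm} that have exactly k excedances. -/
/-!
A set `S` in which no two elements differ by `t * m` with `1 ≤ t ≤ j` makes the progressions
`s, s + m, …, s + j * m` (`s ∈ S`) pairwise disjoint, and cycling each of them as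
`s ↦ s + j * m ↦ s + (j - 1) * m ↦ … ↦ s + m ↦ s` gives a permutation with displacements
in `{-m, 0, j * m}` whose excedances are exactly `S`. Conversely, in such a permutation every
excedance `s` starts such a cycle (strong induction on `s`) and every point sent down lies on
one, so the permutation is recovered from its excedance set, which is therefore separated.
-/

open Finset

namespace BlockPerm

variable {j m : ℕ}

def Separated (j m : ℕ) (S : Finset ℕ) : Prop :=
  ∀ a ∈ S, ∀ b ∈ S, ∀ t ∈ Icc 1 j, a ≠ b + t * m

theorem Separated.eq_of_add_mul_eq {S : Finset ℕ} (hS : Separated j m S) {s s' t t' : ℕ}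
    (hs : s ∈ S) (hs' : s' ∈ S) (ht : t ≤ j) (ht' : t' ≤ j) (h : s + t * m = s' + t' * m) :
    s = s' ∧ t = t' := by
  wlog hle : t ≤ t' generalizing s s' t t'
  · exact (this hs' hs ht' ht h.symm (by omega)).imp Eq.symm Eq.symm
  obtain ⟨d, rfl⟩ := Nat.exists_eq_add_of_le hle
  rw [add_mul] at h
  obtain rfl | hd := Nat.eq_zero_or_pos d
  · exact ⟨by omega, rfl⟩
  · exact absurd (by omega) (hS s hs s' hs' d (mem_Icc.2 ⟨hd, by omega⟩))

/-- For separated `S` this is the product of the cycles `(s, s + j*m, s + (j-1)*m, …, s + m)`,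
`s ∈ S`. -/
def blockShift (j m : ℕ) (S : Finset ℕ) (x : ℕ) : ℕ :=
  if x ∈ S then x + j * m
  else if ∃ s ∈ S, ∃ t < j, x = s + (t + 1) * m then x - m
  else x

def blockShiftInv (j m : ℕ) (S : Finset ℕ) (x : ℕ) : ℕ :=
  if ∃ s ∈ S, x = s + j * m then x - j * m
  else if ∃ s ∈ S, ∃ t < j, x = s + t * m then x + m
  else x

variable {S : Finset ℕ}

theorem blockShift_add_succ_mul (hS : Separated j m S) {s t : ℕ} (hs : s ∈ S) (ht : t < j) :
    blockShift j m S (s + (t + 1) * m) = s + t * m := by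
  have hnot : s + (t + 1) * m ∉ S := fun h =>
    absurd (hS.eq_of_add_mul_eq hs h ht (Nat.zero_le j) (by simp)).2 (by omega)
  rw [blockShift, if_neg hnot, if_pos ⟨s, hs, t, ht, rfl⟩, add_mul]
  omega

theorem blockShiftInv_add_mul (hS : Separated j m S) {s t : ℕ} (hs : s ∈ S) (ht : t < j) :
    blockShiftInv j m S (s + t * m) = s + (t + 1) * m := by
  have hnot : ¬∃ s' ∈ S, s + t * m = s' + j * m := fun ⟨s', hs', h⟩ =>
    absurd (hS.eq_of_add_mul_eq hs hs' ht.le le_rfl h).2 (by omega)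
  rw [blockShiftInv, if_neg hnot, if_pos ⟨s, hs, t, ht, rfl⟩, add_mul, one_mul, add_assoc]

theorem blockShiftInv_blockShift (hS : Separated j m S) (x : ℕ) :
    blockShiftInv j m S (blockShift j m S x) = x := by
  by_cases hx : x ∈ S
  · rw [blockShift, if_pos hx, blockShiftInv, if_pos ⟨x, hx, rfl⟩, Nat.add_sub_cancel]
  by_cases hblock : ∃ s ∈ S, ∃ t < j, x = s + (t + 1) * m
  · obtain ⟨s, hs, t, ht, rfl⟩ := hblock
    rw [blockShift_add_succ_mul hS hs ht, blockShiftInv_add_mul hS hs ht]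
  rw [blockShift, if_neg hx, if_neg hblock, blockShiftInv, if_neg, if_neg]
  · rintro ⟨s, hs, _ | t, ht, rfl⟩
    · exact hx (by simpa using hs)
    · exact hblock ⟨s, hs, t, by omega, rfl⟩
  · rintro ⟨s, hs, rfl⟩
    obtain _ | t := j
    · exact hx (by simpa using hs)
    · exact hblock ⟨s, hs, t, by omega, rfl⟩

theorem blockShift_blockShiftInv (hS : Separated j m S) (x : ℕ) :
    blockShift j m S (blockShiftInv j m S x) = x := by
  by_cases htop : ∃ s ∈ S, x = s + j * m
  · obtain ⟨s, hs, rfl⟩ := htop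
    rw [blockShiftInv, if_pos ⟨s, hs, rfl⟩, Nat.add_sub_cancel, blockShift, if_pos hs]
  by_cases hblock : ∃ s ∈ S, ∃ t < j, x = s + t * m
  · obtain ⟨s, hs, t, ht, rfl⟩ := hblock
    rw [blockShiftInv_add_mul hS hs ht, blockShift_add_succ_mul hS hs ht]
  rw [blockShiftInv, if_neg htop, if_neg hblock, blockShift, if_neg, if_neg]
  · rintro ⟨s, hs, t, ht, rfl⟩
    obtain rfl | hlt := (Nat.succ_le_of_lt ht).eq_or_lt
    · exact htop ⟨s, hs, rfl⟩
    · exact hblock ⟨s, hs, t + 1, hlt, rfl⟩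
  · intro hx
    obtain _ | j := j
    · exact htop ⟨x, hx, by simp⟩
    · exact hblock ⟨x, hx, 0, by omega, by simp⟩

def blockPerm (hS : Separated j m S) : Equiv.Perm ℕ where
  toFun := blockShift j m S
  invFun := blockShiftInv j m S
  left_inv := blockShiftInv_blockShift hS
  right_inv := blockShift_blockShiftInv hS

theorem blockShift_cases (x : ℕ) :
    blockShift j m S x + m = x ∨ blockShift j m S x = x ∨ blockShift j m S x = x + j * m := by
  unfold blockShift
  split_ifs with hx hblock
  · omega
  · obtain ⟨s, -, t, -, rfl⟩ := hblock
    rw [add_mul]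
    omega
  · omega

theorem blockShift_eq_self_of_notMem {n x : ℕ} (hSn : S ⊆ Icc 1 n)
    (hx : x ∉ Icc 1 (n + j * m)) : blockShift j m S x = x := by
  rw [blockShift, if_neg, if_neg]
  · rintro ⟨s, hs, t, ht, rfl⟩
    have := mem_Icc.1 (hSn hs)
    have : (t + 1) * m ≤ j * m := Nat.mul_le_mul_right m ht
    exact hx (mem_Icc.2 ⟨by omega, by omega⟩)
  · intro hxS
    have := mem_Icc.1 (hSn hxS)
    exact hx (mem_Icc.2 ⟨by omega, by omega⟩)

def excedances (N : ℕ) (f : ℕ → ℕ) : Finset ℕ :=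
  (Icc 1 N).filter fun i => i < f i

theorem excedances_blockShift {n : ℕ} (hjm : 0 < j * m) (hSn : S ⊆ Icc 1 n) :
    excedances (n + j * m) (blockShift j m S) = S := by
  ext x
  rw [excedances, mem_filter, blockShift]
  split_ifs with hx hblock
  · have := mem_Icc.1 (hSn hx)
    simp only [hx, iff_true]
    exact ⟨mem_Icc.2 ⟨by omega, by omega⟩, by omega⟩
  · simp only [hx, iff_false]
    omega
  · simp [hx]

section Converse

variable {N : ℕ} {π : Equiv.Perm ℕ} (hm : 0 < m)
  (hfix : ∀ x ∉ Icc 1 N, π x = x)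
  (hstep : ∀ i, π i + m = i ∨ π i = i ∨ π i = i + j * m)

include hm hstep in
theorem apply_add_succ_mul_of_apply_eq_add (s : ℕ) (hs : π s = s + j * m) :
    ∀ t < j, π (s + (t + 1) * m) = s + t * m := by
  induction s using Nat.strong_induction_on with
  | _ s ih =>
  -- A preimage `x` of `s + t * m` with `π x = x + j * m` lies below `s`, on a cycle through `s`
  -- along which `s` would be sent down.
  have hpre : ∀ t < j, π (s + (t + 1) * m) = s + t * m ∨ π (s + t * m) = s + t * m := by
    intro t ht
    obtain ⟨x, hx⟩ := π.surjective (s + t * m)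
    rcases hstep x with h | h | h
    · have : x = s + (t + 1) * m := by rw [add_mul]; omega
      exact Or.inl (this ▸ hx)
    · exact Or.inr (by rw [← hx, h, h])
    · obtain ⟨d, rfl⟩ := Nat.exists_eq_add_of_lt ht
      simp only [add_mul, one_mul] at h hs ⊢
      have hxs : x + (d * m + m) = s := by omega
      have := ih x (by omega) (by rw [h, add_mul, add_mul, one_mul]) d (by omega)
      rw [add_mul, one_mul, hxs, hs] at this
      omega
  intro t ht
  induction t with
  | zero =>
    refine (hpre 0 ht).resolve_right fun h => ?_
    rw [zero_mul, add_zero, hs] at h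
    have : 0 < j * m := Nat.mul_pos ht hm
    omega
  | succ t ih =>
    have := ih (by omega)
    refine (hpre (t + 1) ht).resolve_right fun h => ?_
    rw [h, add_mul] at this
    omega

include hm hfix hstep in
theorem exists_apply_eq_add_of_apply_add_eq {y : ℕ} (hy : π y + m = y) :
    ∃ s, π s = s + j * m ∧ ∃ t < j, y = s + (t + 1) * m := by
  -- Walk up from `y` through the points sent down; the walk ends below `N`.
  suffices ∀ d y, N < y + d → π y + m = y →
      ∃ s, π s = s + j * m ∧ ∃ t < j, y = s + (t + 1) * m from this (N + 1) y (by omega) hy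
  intro d
  induction d with
  | zero =>
    intro y hy hdown
    have := hfix y (by simp only [mem_Icc]; omega)
    omega
  | succ d ih =>
    intro y hyd hdown
    obtain ⟨x, hx⟩ := π.surjective y
    rcases hstep x with h | h | h
    · obtain ⟨s, hs, t, ht, hxs⟩ := ih x (by omega) h
      have hys : y + m = s + (t + 1) * m := by omega
      obtain _ | t := t
      · obtain rfl : y = s := by rw [zero_add, one_mul] at hys; omega
        omega
      · exact ⟨s, hs, t, by omega, by rw [add_mul _ 1] at hys; omega⟩
    · obtain rfl : x = y := h.symm.trans hx
      omega
    · rcases Nat.eq_zero_or_pos j with rfl | hj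
      · obtain rfl : x = y := by rw [zero_mul, add_zero] at h; exact h.symm.trans hx
        omega
      · exact ⟨x, h, j - 1, by omega, by rw [Nat.sub_add_cancel hj, ← hx, h]⟩

include hm hfix hstep in
theorem mem_excedances_iff (hj : 0 < j) {i : ℕ} : i ∈ excedances N π ↔ π i = i + j * m := by
  have hjm : 0 < j * m := Nat.mul_pos hj hm
  rw [excedances, mem_filter]
  refine ⟨fun ⟨_, hi⟩ => by rcases hstep i with h | h | h <;> omega,
    fun h => ⟨?_, by omega⟩⟩
  by_contra hi
  have := hfix i hi
  omega

include hm hfix hstep in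
theorem separated_excedances (hj : 0 < j) : Separated j m (excedances N π) := by
  intro a ha b hb t ht hab
  rw [mem_excedances_iff hm hfix hstep hj] at ha hb
  obtain ⟨t, rfl⟩ := Nat.exists_eq_add_of_lt (mem_Icc.1 ht).1
  have := apply_add_succ_mul_of_apply_eq_add hm hstep b hb t (by simp at ht; omega)
  rw [zero_add] at hab
  rw [← hab, ha, hab, add_mul] at this
  omega

include hm hfix hstep in
theorem blockShift_excedances (hj : 0 < j) : blockShift j m (excedances N π) = π := by
  funext x
  rw [blockShift]
  split_ifs with hx hblock
  · exact ((mem_excedances_iff hm hfix hstep hj).1 hx).symm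
  · obtain ⟨s, hs, t, ht, rfl⟩ := hblock
    have hs' := (mem_excedances_iff hm hfix hstep hj).1 hs
    rw [apply_add_succ_mul_of_apply_eq_add hm hstep s hs' t ht, add_mul]
    omega
  · rcases hstep x with h | h | h
    · obtain ⟨s, hs, t, ht, rfl⟩ := exists_apply_eq_add_of_apply_add_eq hm hfix hstep h
      exact absurd ⟨s, (mem_excedances_iff hm hfix hstep hj).2 hs, t, ht, rfl⟩ hblock
    · exact h.symm
    · exact absurd ((mem_excedances_iff hm hfix hstep hj).2 h) hx

end Converse

theorem excedances_subset_Icc {n : ℕ} {π : Equiv.Perm ℕ} (hj : 0 < j) (hm : 0 < m)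
    (hfix : ∀ x ∉ Icc 1 (n + j * m), π x = x)
    (hstep : ∀ i, π i + m = i ∨ π i = i ∨ π i = i + j * m) :
    excedances (n + j * m) π ⊆ Icc 1 n := by
  intro i hi
  have hiN := (mem_filter.1 hi).1
  rw [mem_excedances_iff hm hfix hstep hj] at hi
  have hπi : π i ∈ Icc 1 (n + j * m) := by
    by_contra h
    have := π.injective (hfix _ h)
    have : 0 < j * m := Nat.mul_pos hj hm
    omega
  simp only [mem_Icc] at hiN hπi ⊢
  omega

def separatedSubsetEquiv (hj : 0 < j) (hm : 0 < m) (n k : ℕ) :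
    {S : Finset ℕ // S ⊆ Icc 1 n ∧ S.card = k ∧ Separated j m S} ≃
      {π : Equiv.Perm ℕ // (∀ x ∉ Icc 1 (n + j * m), π x = x) ∧
        (∀ i, π i + m = i ∨ π i = i ∨ π i = i + j * m) ∧
        (excedances (n + j * m) π).card = k} where
  toFun S := ⟨blockPerm S.2.2.2, fun _ => blockShift_eq_self_of_notMem S.2.1, blockShift_cases,
    (congrArg card (excedances_blockShift (Nat.mul_pos hj hm) S.2.1)).trans S.2.2.1⟩
  invFun π := ⟨excedances (n + j * m) π, excedances_subset_Icc hj hm π.2.1 π.2.2.1, π.2.2.2,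
    separated_excedances hm π.2.1 π.2.2.1 hj⟩
  left_inv S := Subtype.ext (excedances_blockShift (Nat.mul_pos hj hm) S.2.1)
  right_inv π := Subtype.ext (Equiv.coe_inj.1 (blockShift_excedances hm π.2.1 π.2.2.1 hj))

theorem separated_iff_forall_sub_notMem {S : Finset ℕ} (hm : 0 < m) :
    (∀ a ∈ S, ∀ b ∈ S, b < a → a - b ∉ (Icc 1 j).image (· * m)) ↔
      Separated j m S := by
  refine forall₄_congr fun a _ b _ => ⟨fun h t ht hab => ?_, fun h hba hmem => ?_⟩
  · have : 0 < t * m := Nat.mul_pos (mem_Icc.1 ht).1 hm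
    exact h (by omega) (mem_image.2 ⟨t, ht, by omega⟩)
  · obtain ⟨t, ht, hab⟩ := mem_image.1 hmem
    exact h t ht (by omega)

theorem restrictedCountK_image_mul (hm : 0 < m) (n k : ℕ) :
    restrictedCountK ((Icc 1 j).image (· * m)) n k =
      Nat.card {S : Finset ℕ // S ⊆ Icc 1 n ∧ S.card = k ∧ Separated j m S} := by
  rw [restrictedCountK, ← Nat.card_eq_finsetCard]
  refine Nat.card_congr (Equiv.subtypeEquivRight fun S => ?_)
  rw [mem_filter, mem_powerset, separated_iff_forall_sub_notMem hm]

theorem int_sub_eq_or_iff {a i : ℕ} :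
    ((a : ℤ) - i = -(m : ℤ) ∨ (a : ℤ) - i = 0 ∨ (a : ℤ) - i = (j : ℤ) * m) ↔
      a + m = i ∨ a = i ∨ a = i + j * m := by
  have : ((j * m : ℕ) : ℤ) = (j : ℤ) * m := by push_cast; rfl
  omega

end BlockPerm

open BlockPerm

/-- bijection between `k`-subsets of `{1,…,n}` avoiding differences in
`{m,2m,…,jm}` and permutations `π` of `{1,…,n+jm}` with `π(i)-i ∈ {-m,0,jm}`
having exactly `k` excedances. -/
theorem stmt_6 (j m n k : ℕ) (hj : 1 ≤ j) (hm : 1 ≤ m) :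
    restrictedCountK ((Finset.Icc 1 j).image fun i => i * m) n k =
      Nat.card {π : Equiv.Perm ℕ //
        (∀ x : ℕ, x ∉ Finset.Icc 1 (n + j * m) → π x = x) ∧
        (∀ i ∈ Finset.Icc 1 (n + j * m),
          (π i : ℤ) - i = -(m : ℤ) ∨ (π i : ℤ) - i = 0 ∨ (π i : ℤ) - i = (j : ℤ) * m) ∧
        ((Finset.Icc 1 (n + j * m)).filter fun i => i < π i).card = k} := by
  rw [restrictedCountK_image_mul hm, Nat.card_congr (separatedSubsetEquiv hj hm n k)]
  refine Nat.card_congr (Equiv.subtypeEquivRight fun π => and_congr_right fun hfix => ?_)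
  simp only [int_sub_eq_or_iff]
  refine and_congr_left' ⟨fun h i _ => h i, fun h i => ?_⟩
  by_cases hi : i ∈ Icc 1 (n + j * m)
  · exact h i hi
  · exact Or.inr (Or.inl (hfix i hi))
end

section
/- Let j ≥ 1, m ≥ 1 and n ≥ 0 be integers. The number of permutations π of {1,…,n+jm} satisfying π(i) − i ∈ {−m, 0, jm} for all i ∈ {1,…,n+jm} equals the number of subsets S of {1,…,n} such that no two elements of S differ by an element of Q = {m, 2m, …, jm}. -/
/-! A jump `x ↦ x + jm` can only be compensated by steps of `-m`, so such a permutation is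
the product of the disjoint cycles `(i, i + jm, i + (j-1)m, …, i + m)` over the set `S` of its
jump points; `S` lies in `{1,…,n}`, and the cycles are disjoint exactly when no two elements of
`S` differ by `km` with `1 ≤ k ≤ j`. The cycles are forced by induction downwards from the largest
moved point: no `x + (t+1)m` with `t < j` is a jump point, as its cycle would hit `x + jm = π x`,
so each of these points has a preimage other than itself and must step down. Conversely a
down-step `y ↦ y - m` is traced upwards to the jump point of its cycle. -/

open Finset

-- For `MultipleFree j m S`, the product of the disjoint cycles `(i, i + jm, i + (j-1)m, …, i + m)`,
-- `i ∈ S`.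
def chainShift (j m : ℕ) (S : Finset ℕ) (x : ℕ) : ℕ :=
  if x ∈ S then x + j * m
  else if ∃ i ∈ S, ∃ k < j, x = i + (k + 1) * m then x - m
  else x

def chainUnshift (j m : ℕ) (S : Finset ℕ) (y : ℕ) : ℕ :=
  if ∃ i ∈ S, y = i + j * m then y - j * m
  else if ∃ i ∈ S, ∃ k < j, y = i + k * m then y + m
  else y

-- An `abbrev`, so that filtering by it uses the same decidability instance as `restrictedCount`.
abbrev MultipleFree (j m : ℕ) (S : Finset ℕ) : Prop :=
  ∀ a ∈ S, ∀ b ∈ S, b < a → a - b ∉ (Icc 1 j).image fun i => i * m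

theorem MultipleFree.eq_of_add_mul_eq {j m : ℕ} (hm : 1 ≤ m) {S : Finset ℕ}
    (hS : MultipleFree j m S) {i i' k k' : ℕ} (hi : i ∈ S) (hi' : i' ∈ S) (hk : k ≤ j)
    (hk' : k' ≤ j) (h : i + k * m = i' + k' * m) : i = i' ∧ k = k' := by
  wlog hle : i ≤ i' generalizing i i' k k'
  · exact (this hi' hi hk' hk h.symm (by omega)).imp Eq.symm Eq.symm
  obtain rfl | hlt := hle.eq_or_lt
  · exact ⟨rfl, Nat.eq_of_mul_eq_mul_right hm (by omega)⟩
  · refine absurd (mem_image.2 ⟨k - k', mem_Icc.2 ⟨?_, by omega⟩, ?_⟩) (hS i' hi' i hi hlt)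
    · by_contra! hkk
      have := Nat.mul_le_mul_right m (show k ≤ k' by omega)
      omega
    · rw [Nat.sub_mul]; omega

section ChainPerm

variable {j m : ℕ} {S : Finset ℕ}

theorem chainUnshift_chainShift (hj : 1 ≤ j) (hm : 1 ≤ m) (hS : MultipleFree j m S) (x : ℕ) :
    chainUnshift j m S (chainShift j m S x) = x := by
  unfold chainShift
  split_ifs with hx hchain
  · rw [chainUnshift, if_pos ⟨x, hx, rfl⟩]; omega
  · obtain ⟨i, hi, k, hk, rfl⟩ := hchain
    have hx : i + (k + 1) * m - m = i + k * m := by rw [add_one_mul]; omega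
    rw [hx, chainUnshift, if_neg, if_pos ⟨i, hi, k, hk, rfl⟩, add_assoc, add_one_mul]
    rintro ⟨i', hi', he⟩
    have := (hS.eq_of_add_mul_eq hm hi hi' hk.le le_rfl he).2
    omega
  · unfold chainUnshift
    split_ifs with hend hmid
    · obtain ⟨i, hi, rfl⟩ := hend
      obtain ⟨j, rfl⟩ := Nat.exists_eq_add_of_le' hj
      exact absurd ⟨i, hi, j, by omega, rfl⟩ hchain
    · obtain ⟨i, hi, k, hk, rfl⟩ := hmid
      obtain _ | k := k
      · simp only [zero_mul, add_zero] at hx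
        exact absurd hi hx
      · exact absurd ⟨i, hi, k, by omega, rfl⟩ hchain
    · rfl

theorem chainShift_chainUnshift (hj : 1 ≤ j) (hm : 1 ≤ m) (hS : MultipleFree j m S) (y : ℕ) :
    chainShift j m S (chainUnshift j m S y) = y := by
  unfold chainUnshift
  split_ifs with hend hmid
  · obtain ⟨i, hi, rfl⟩ := hend
    rw [Nat.add_sub_cancel, chainShift, if_pos hi]
  · obtain ⟨i, hi, k, hk, rfl⟩ := hmid
    rw [chainShift, if_neg, if_pos ⟨i, hi, k, hk, by rw [add_one_mul]; omega⟩,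
      Nat.add_sub_cancel]
    intro hmem
    have := (hS.eq_of_add_mul_eq hm hi hmem (k := k + 1) (k' := 0) hk (Nat.zero_le _)
      (by rw [add_one_mul]; omega)).2
    omega
  · unfold chainShift
    split_ifs with hy hchain
    · exact absurd ⟨y, hy, 0, by omega, by simp⟩ hmid
    · obtain ⟨i, hi, k, hk, rfl⟩ := hchain
      obtain hkj | hkj : k + 1 = j ∨ k + 1 < j := by omega
      · exact absurd ⟨i, hi, by rw [hkj]⟩ hend
      · exact absurd ⟨i, hi, k + 1, hkj, rfl⟩ hmid
    · rfl

theorem chainShift_eq_add_iff (hj : 1 ≤ j) (hm : 1 ≤ m) {x : ℕ} :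
    chainShift j m S x = x + j * m ↔ x ∈ S := by
  have hjm : 1 ≤ j * m := Nat.one_le_iff_ne_zero.2 (by positivity)
  unfold chainShift
  split_ifs with hx hchain <;> simp only [hx, iff_false] <;> omega

theorem chainShift_step (j m : ℕ) (S : Finset ℕ) (x : ℕ) :
    chainShift j m S x + m = x ∨ chainShift j m S x = x ∨ chainShift j m S x = x + j * m := by
  unfold chainShift
  split_ifs with hx hchain
  · exact .inr (.inr rfl)
  · obtain ⟨i, -, k, -, rfl⟩ := hchain
    left; rw [add_one_mul]; omega
  · exact .inr (.inl rfl)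

theorem chainShift_eq_self {n : ℕ} (hsub : S ⊆ Icc 1 n) {x : ℕ}
    (hx : x ∉ Icc 1 (n + j * m)) : chainShift j m S x = x := by
  unfold chainShift
  split_ifs with hxS hchain
  · exact absurd (hsub hxS) (by simp only [mem_Icc] at hx ⊢; omega)
  · obtain ⟨i, hi, k, hk, rfl⟩ := hchain
    have := mem_Icc.1 (hsub hi)
    have := Nat.mul_le_mul_right m (show k + 1 ≤ j from hk)
    exact absurd (mem_Icc.2 ⟨by omega, by omega⟩) hx
  · rfl

def chainPerm (hj : 1 ≤ j) (hm : 1 ≤ m) (S : Finset ℕ) (hS : MultipleFree j m S) :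
    Equiv.Perm ℕ :=
  ⟨chainShift j m S, chainUnshift j m S, chainUnshift_chainShift hj hm hS,
    chainShift_chainUnshift hj hm hS⟩

end ChainPerm

section Displacement

variable {j m N : ℕ} {π : Equiv.Perm ℕ}

def DescendsFrom (π : Equiv.Perm ℕ) (j m x : ℕ) : Prop :=
  ∀ k < j, π (x + (k + 1) * m) = x + k * m

theorem not_descendsFrom_add_succ_mul (hm : 1 ≤ m) {x t : ℕ} (hx : π x = x + j * m)
    (ht : t < j) : ¬ DescendsFrom π j m (x + (t + 1) * m) := by
  intro hdesc
  obtain ⟨a, rfl⟩ := Nat.exists_eq_add_of_lt ht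
  have hcoll : π (x + (t + 1) * m + (a + 1) * m) = π x := by
    rw [hdesc a (by omega), hx]; ring
  have := π.injective hcoll
  nlinarith

theorem down_of_preimage_ne (hstep : ∀ i, π i + m = i ∨ π i = i ∨ π i = i + j * m)
    {y z : ℕ} (hy : π y ≠ y + j * m) (hz : π z = y) (hzy : z ≠ y) : π y + m = y := by
  rcases hstep y with h | h | h
  · exact h
  · exact absurd (π.injective (hz.trans h.symm)) hzy
  · exact absurd h hy

theorem descendsFrom_of_up (hm : 1 ≤ m) (hbound : ∀ x, π x ≠ x → x ≤ N)
    (hstep : ∀ i, π i + m = i ∨ π i = i ∨ π i = i + j * m) {x : ℕ} (hx : π x = x + j * m) :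
    DescendsFrom π j m x := by
  induction hd : N - x using Nat.strong_induction_on generalizing x with
  | _ d ih =>
  have hnot_up : ∀ t < j, π (x + (t + 1) * m) ≠ x + (t + 1) * m + j * m := by
    intro t ht hup
    have hpos : 1 ≤ (t + 1) * m := Nat.one_le_iff_ne_zero.2 (by positivity)
    have hle := hbound _ (by rw [hup]; nlinarith)
    exact not_descendsFrom_add_succ_mul hm hx ht (ih _ (by omega) hup rfl)
  suffices h : ∀ b k, k + b + 1 = j → π (x + (k + 1) * m) = x + k * m from
    fun k hk => h (j - k - 1) k (by omega)
  intro b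
  induction b with
  | zero =>
    intro k hk
    have hdown := down_of_preimage_ne hstep (hnot_up k (by omega)) (z := x)
      (by rw [hx, ← hk]) (by nlinarith)
    linarith [add_one_mul k m]
  | succ b ihb =>
    intro k hk
    have hdown := down_of_preimage_ne hstep (hnot_up k (by omega))
      (z := x + (k + 1 + 1) * m) (ihb (k + 1) (by omega)) (by nlinarith)
    linarith [add_one_mul k m]

theorem exists_up_of_down (hj : 1 ≤ j) (hm : 1 ≤ m) (hbound : ∀ x, π x ≠ x → x ≤ N)
    (hstep : ∀ i, π i + m = i ∨ π i = i ∨ π i = i + j * m) {y : ℕ} (hy : π y + m = y) :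
    ∃ x, π x = x + j * m ∧ ∃ k < j, y = x + (k + 1) * m := by
  induction hd : N - y using Nat.strong_induction_on generalizing y with
  | _ d ih =>
  obtain ⟨z, rfl⟩ := π.surjective y
  rcases hstep z with hdown | hfix | hup
  · have hle := hbound z (by omega)
    obtain ⟨x, hx, k, hk, hz⟩ := ih _ (by omega) hdown rfl
    obtain _ | k := k
    · have hzx : π z = x := by rw [zero_add, one_mul] at hz; omega
      rw [hzx] at hy; omega
    · exact ⟨x, hx, k, by omega, by linarith [add_one_mul (k + 1) m]⟩
  · rw [hfix] at hy; omega
  · obtain ⟨j, rfl⟩ := Nat.exists_eq_add_of_le' hj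
    exact ⟨z, hup, j, by omega, hup⟩

theorem eq_chainShift (hj : 1 ≤ j) (hm : 1 ≤ m) (hbound : ∀ x, π x ≠ x → x ≤ N)
    (hstep : ∀ i, π i + m = i ∨ π i = i ∨ π i = i + j * m) {S : Finset ℕ}
    (hS : ∀ x, x ∈ S ↔ π x = x + j * m) (x : ℕ) : π x = chainShift j m S x := by
  unfold chainShift
  split_ifs with hup hchain
  · exact (hS x).1 hup
  · obtain ⟨i, hi, k, hk, rfl⟩ := hchain
    rw [descendsFrom_of_up hm hbound hstep ((hS i).1 hi) k hk]
    rw [add_one_mul]; omega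
  · rcases hstep x with hdown | hfix | hup'
    · obtain ⟨i, hi, k, hk, rfl⟩ := exists_up_of_down hj hm hbound hstep hdown
      exact absurd ⟨i, (hS i).2 hi, k, hk, rfl⟩ hchain
    · exact hfix
    · exact absurd ((hS x).2 hup') hup

theorem multipleFree_of_forall_mem_iff (hm : 1 ≤ m) (hbound : ∀ x, π x ≠ x → x ≤ N)
    (hstep : ∀ i, π i + m = i ∨ π i = i ∨ π i = i + j * m) {S : Finset ℕ}
    (hS : ∀ x, x ∈ S ↔ π x = x + j * m) : MultipleFree j m S := by
  intro a ha b hb hba hmem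
  obtain ⟨k, hk, hkm⟩ := mem_image.1 hmem
  obtain ⟨t, rfl⟩ := Nat.exists_eq_add_of_le' (mem_Icc.1 hk).1
  have ha' : a = b + (t + 1) * m := by omega
  subst ha'
  exact not_descendsFrom_add_succ_mul hm ((hS b).1 hb) (by simp only [mem_Icc] at hk; omega)
    (descendsFrom_of_up hm hbound hstep ((hS _).1 ha))

theorem mem_filter_up_iff {n : ℕ} (hj : 1 ≤ j) (hm : 1 ≤ m)
    (hfix : ∀ x ∉ Icc 1 (n + j * m), π x = x) {x : ℕ} :
    x ∈ (Icc 1 n).filter (fun x => π x = x + j * m) ↔ π x = x + j * m := by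
  have hjm : 1 ≤ j * m := Nat.one_le_iff_ne_zero.2 (by positivity)
  refine ⟨fun h => (mem_filter.1 h).2, fun hup => mem_filter.2 ⟨?_, hup⟩⟩
  have hx : x ∈ Icc 1 (n + j * m) := by
    by_contra hx
    have := hfix x hx
    omega
  have hπx : π x ∈ Icc 1 (n + j * m) := by
    by_contra hπx
    have := π.injective (hfix _ hπx)
    omega
  simp only [mem_Icc] at hx hπx ⊢
  omega

end Displacement

theorem le_of_apply_ne {π : Equiv.Perm ℕ} {N : ℕ} (hfix : ∀ x ∉ Icc 1 N, π x = x) :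
    ∀ x, π x ≠ x → x ≤ N :=
  fun x hx => (mem_Icc.1 (not_not.1 (mt (hfix x) hx))).2

def chainPermEquiv {j m : ℕ} (hj : 1 ≤ j) (hm : 1 ≤ m) (n : ℕ) :
    {π : Equiv.Perm ℕ // (∀ x ∉ Icc 1 (n + j * m), π x = x) ∧
      ∀ i, π i + m = i ∨ π i = i ∨ π i = i + j * m} ≃
    {S // S ∈ (Icc 1 n).powerset.filter (MultipleFree j m)} where
  toFun π := ⟨(Icc 1 n).filter (fun x => π.1 x = x + j * m),
    mem_filter.2 ⟨mem_powerset.2 (filter_subset _ _), multipleFree_of_forall_mem_iff hm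
      (le_of_apply_ne π.2.1) π.2.2 fun _ => mem_filter_up_iff hj hm π.2.1⟩⟩
  invFun S := ⟨chainPerm hj hm S.1 (mem_filter.1 S.2).2,
    fun _ => chainShift_eq_self (mem_powerset.1 (mem_filter.1 S.2).1), chainShift_step j m S.1⟩
  left_inv π := Subtype.ext <| Equiv.ext fun x =>
    (eq_chainShift hj hm (le_of_apply_ne π.2.1) π.2.2
      (fun _ => mem_filter_up_iff hj hm π.2.1) x).symm
  right_inv S := Subtype.ext <| Finset.ext fun _ =>
    (mem_filter_up_iff hj hm fun _ =>
      chainShift_eq_self (mem_powerset.1 (mem_filter.1 S.2).1)).trans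
      (chainShift_eq_add_iff hj hm)

theorem int_displacement_iff {a b j m : ℕ} :
    ((b : ℤ) - a = -(m : ℤ) ∨ (b : ℤ) - a = 0 ∨ (b : ℤ) - a = (j : ℤ) * m) ↔
      (b + m = a ∨ b = a ∨ b = a + j * m) := by
  rw [← Nat.cast_mul]; omega

/-- the number of permutations `π` of `{1,…,n+jm}` with
`π(i)-i ∈ {-m,0,jm}` equals the number of subsets of `{1,…,n}` avoiding
differences in `{m,2m,…,jm}`. -/
theorem stmt_7 (j m n : ℕ) (hj : 1 ≤ j) (hm : 1 ≤ m) :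
    Nat.card {π : Equiv.Perm ℕ //
        (∀ x : ℕ, x ∉ Finset.Icc 1 (n + j * m) → π x = x) ∧
        (∀ i ∈ Finset.Icc 1 (n + j * m),
          (π i : ℤ) - i = -(m : ℤ) ∨ (π i : ℤ) - i = 0 ∨ (π i : ℤ) - i = (j : ℤ) * m)} =
      restrictedCount ((Finset.Icc 1 j).image fun i => i * m) n := by
  have hsteps (π : Equiv.Perm ℕ) (hfix : ∀ x ∉ Icc 1 (n + j * m), π x = x) :
      (∀ i ∈ Icc 1 (n + j * m),
        (π i : ℤ) - i = -(m : ℤ) ∨ (π i : ℤ) - i = 0 ∨ (π i : ℤ) - i = (j : ℤ) * m) ↔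
      ∀ i, π i + m = i ∨ π i = i ∨ π i = i + j * m := by
    refine ⟨fun h i => ?_, fun h i _ => int_displacement_iff.2 (h i)⟩
    by_cases hi : i ∈ Icc 1 (n + j * m)
    · exact int_displacement_iff.1 (h i hi)
    · exact .inr (.inl (hfix i hi))
  rw [restrictedCount, ← Nat.card_eq_finsetCard]
  exact Nat.card_congr ((Equiv.subtypeEquivRight fun π => and_congr_right (hsteps π)).trans
    (chainPermEquiv hj hm n))
end

section
/- Let m ≥ 1, j ≥ 1, i ≥ 0 and 0 ≤ r ≤ m−1 be integers. The number of permutations π of {1,…,im+r} satisfying π(s) − s ∈ {−m, 0, jm} for all s equals (f^{(j+1)}_i)^{m−r} · (f^{(j+1)}_{i+1})^r. -/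
/-!
Each allowed move `s ↦ π s` preserves `s mod m`, so `π` is a product of independent
permutations of the residue classes of `{1, …, im + r}`. A residue class is an arithmetic
progression with difference `m` (of length `i + 1` for `r` of the residues and `i` for the other
`m - r`), and rescaling it to an interval turns the allowed displacements into `{-1, 0, j}`.
On an interval `[a, a + ℓ)` the first point is either fixed, or sent to `a + j`, which forces
`a + k ↦ a + k - 1` for `1 ≤ k ≤ j`; removing `a`, resp. the whole block `[a, a + j]`, gives
the recursion `f ℓ = f (ℓ - 1) + f (ℓ - j - 1)` of the `(1, j + 1)`-bonacci numbers.
-/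

/-- The `(1,t)`-bonacci numbers `f^{(t)}_n`, satisfying
`f^{(t)}_n = f^{(t)}_{n-1} + f^{(t)}_{n-t} + δ_{n,0}` with `f^{(t)}_{n<0} = 0`
(for `t ≥ 1`). -/
def bonacci (t : ℕ) : ℕ → ℕ
  | 0 => 1
  | n + 1 =>
    bonacci t n + if h : 0 < t ∧ t ≤ n + 1 then bonacci t (n + 1 - t) else 0
  termination_by n => n
  decreasing_by all_goals omega

open Equiv Function

lemma bonacci_zero (t : ℕ) : bonacci t 0 = 1 := by
  rw [bonacci]

lemma bonacci_succ_add_one (j n : ℕ) :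
    bonacci (j + 1) (n + 1) =
      bonacci (j + 1) n + if j ≤ n then bonacci (j + 1) (n - j) else 0 := by
  rw [bonacci]
  by_cases h : j ≤ n
  · rw [dif_pos ⟨j.succ_pos, by omega⟩, if_pos h, show n + 1 - (j + 1) = n - j by omega]
  · rw [dif_neg (by omega), if_neg h]

namespace RestrictedPerm

section General

variable {α β : Type*}

def admissible (R : α → α → Prop) (S : Set α) : Set (Perm α) :=
  {π | (∀ x ∉ S, π x = x) ∧ ∀ x ∈ S, R x (π x)}

lemma apply_mem_iff_of_fixes {π : Perm α} {S : Set α} (h : ∀ x ∉ S, π x = x) (x : α) :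
    π x ∈ S ↔ x ∈ S := by
  by_cases hx : x ∈ S
  · refine iff_of_true (by_contra fun hπx => hπx ?_) hx
    rwa [π.injective (h _ hπx)]
  · rw [h x hx]

lemma admissible_empty (R : α → α → Prop) : admissible R ∅ = {1} := by
  ext π
  simp only [admissible, Set.notMem_empty, not_false_eq_true, forall_const, false_imp_iff,
    implies_true, and_true, Set.mem_ofPred_eq, Set.mem_singleton_iff]
  exact ⟨fun h => Equiv.ext h, fun h x => by simp [h]⟩

lemma admissible_insert_inter_fixed {R : α → α → Prop} {S : Set α} {a : α} (ha : a ∉ S)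
    (hR : R a a) : admissible R (insert a S) ∩ {π | π a = a} = admissible R S := by
  ext π
  simp only [admissible, Set.mem_inter_iff, Set.mem_ofPred_eq, Set.mem_insert_iff,
    forall_eq_or_imp, not_or]
  constructor
  · rintro ⟨⟨hfix, -, hstep⟩, hπa⟩
    exact ⟨fun x hx => (eq_or_ne x a).elim (· ▸ hπa) (hfix x ⟨·, hx⟩), hstep⟩
  · rintro ⟨hfix, hstep⟩
    have hπa := hfix a ha
    exact ⟨⟨fun x hx => hfix x hx.2, by rwa [hπa], hstep⟩, hπa⟩

lemma finite_admissible (R : α → α → Prop) {S : Set α} (hS : S.Finite) :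
    (admissible R S).Finite := by
  classical
  have : Finite S := hS
  have : Finite {π : Perm α | ∀ x ∉ S, π x = x} :=
    Finite.of_equiv _ (Perm.subtypeEquivSubtypePerm (· ∈ S))
  exact (Set.toFinite {π : Perm α | ∀ x ∉ S, π x = x}).subset fun π hπ => hπ.1

lemma ncard_admissible_eq_card_perm (R : α → α → Prop) (S : Set α) :
    (admissible R S).ncard = Nat.card {σ : Perm S // ∀ x : S, R x (σ x)} := by
  classical
  refine (Nat.card_congr ?_).symm
  refine ((Perm.subtypeEquivSubtypePerm (· ∈ S)).subtypeEquiv fun σ => ?_).trans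
    (subtypeSubtypeEquivSubtypeInter _ fun π : Perm α => ∀ x ∈ S, R x (π x))
  simp +contextual [Perm.ofSubtype_apply_of_mem]

lemma ncard_admissible_image {R : β → β → Prop} {R' : α → α → Prop} {e : α → β}
    (he : Injective e) {U : Set α} (hR : ∀ x ∈ U, ∀ y ∈ U, R (e x) (e y) ↔ R' x y) :
    (admissible R (e '' U)).ncard = (admissible R' U).ncard := by
  rw [ncard_admissible_eq_card_perm, ncard_admissible_eq_card_perm]
  let f := Equiv.Set.image e U he
  refine Nat.card_congr (f.permCongr.subtypeEquiv fun σ => ?_).symm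
  rw [f.surjective.forall]
  simp only [permCongr_apply, symm_apply_apply]
  exact forall_congr' fun x => (hR x x.2 (σ x) (σ x).2).symm

lemma ofSubtype_subtypePerm_apply {π : Perm α} {p : α → Prop} [DecidablePred p]
    (h : ∀ x, p (π x) ↔ p x) (x : α) :
    Perm.ofSubtype (π.subtypePerm h) x = if p x then π x else x := by
  split_ifs with hx
  exacts [Perm.ofSubtype_subtypePerm_of_mem h hx, Perm.ofSubtype_subtypePerm_of_not_mem h hx]

section Split

variable {R : α → α → Prop} {S P : Set α} (hR : ∀ x y, R x y → (y ∈ P ↔ x ∈ P))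
include hR

lemma apply_mem_iff_of_mem_admissible {π : Perm α} (hπ : π ∈ admissible R S) (x : α) :
    π x ∈ P ↔ x ∈ P := by
  by_cases hx : x ∈ S
  exacts [hR _ _ (hπ.2 x hx), by rw [hπ.1 x hx]]

lemma restrict_mem_admissible [DecidablePred (· ∈ P)] {π : Perm α} (hπ : π ∈ admissible R S) :
    Perm.ofSubtype (π.subtypePerm (apply_mem_iff_of_mem_admissible hR hπ)) ∈
      admissible R (S ∩ P) := by
  refine ⟨fun x hx => ?_, fun x hx => ?_⟩ <;> rw [ofSubtype_subtypePerm_apply]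
  · split_ifs with hxP
    exacts [hπ.1 x fun hxS => hx ⟨hxS, hxP⟩, rfl]
  · exact (if_pos hx.2).symm ▸ hπ.2 x hx.1

lemma mul_apply_of_mem_admissible [DecidablePred (· ∈ P)] {σ τ : Perm α}
    (hσ : σ ∈ admissible R (S ∩ P)) (hτ : τ ∈ admissible R (S ∩ Pᶜ)) (x : α) :
    (σ * τ) x = if x ∈ P then σ x else τ x := by
  split_ifs with hx
  · rw [Perm.mul_apply, hτ.1 x fun h => h.2 hx]
  · have hτx : τ x ∉ P := mt (apply_mem_iff_of_mem_admissible hR hτ x).1 hx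
    exact hσ.1 _ fun h => hτx h.2

lemma ncard_admissible_eq_mul :
    (admissible R S).ncard = (admissible R (S ∩ P)).ncard * (admissible R (S ∩ Pᶜ)).ncard := by
  classical
  have hRc : ∀ x y, R x y → (y ∈ Pᶜ ↔ x ∈ Pᶜ) := fun x y h => not_congr (hR x y h)
  rw [← Nat.card_coe_set_eq, ← Nat.card_coe_set_eq, ← Nat.card_coe_set_eq, ← Nat.card_prod]
  refine Nat.card_congr
    { toFun := fun π => (⟨_, restrict_mem_admissible hR π.2⟩, ⟨_, restrict_mem_admissible hRc π.2⟩)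
      invFun := fun στ => ⟨στ.1 * στ.2, fun x hx => ?_, fun x hx => ?_⟩
      left_inv := fun π => Subtype.ext <| Equiv.ext fun x => ?_
      right_inv := fun στ => Prod.ext (Subtype.ext <| Equiv.ext fun x => ?_)
        (Subtype.ext <| Equiv.ext fun x => ?_) }
  · rw [mul_apply_of_mem_admissible hR στ.1.2 στ.2.2]
    split_ifs
    exacts [στ.1.2.1 x fun h => hx h.1, στ.2.2.1 x fun h => hx h.1]
  · rw [mul_apply_of_mem_admissible hR στ.1.2 στ.2.2]
    split_ifs with hxP
    exacts [στ.1.2.2 x ⟨hx, hxP⟩, στ.2.2.2 x ⟨hx, hxP⟩]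
  · have := apply_mem_iff_of_mem_admissible hR π.2 x
    by_cases hx : x ∈ P <;> simp [ofSubtype_subtypePerm_apply, hx, this]
  · rw [ofSubtype_subtypePerm_apply, mul_apply_of_mem_admissible hR στ.1.2 στ.2.2]
    split_ifs with hxP
    exacts [rfl, (στ.1.2.1 x fun h => hxP h.2).symm]
  · rw [ofSubtype_subtypePerm_apply, mul_apply_of_mem_admissible hR στ.1.2 στ.2.2]
    by_cases hxP : x ∈ P <;>
      simp only [Set.mem_compl_iff, hxP, if_true, if_false, not_true, not_false_eq_true]
    exact (στ.2.2.1 x fun h => h.2 hxP).symm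

end Split

lemma ncard_admissible_eq_prod {ι : Type*} [DecidableEq ι] {R : α → α → Prop} (f : α → ι)
    (hR : ∀ x y, R x y → f y = f x) (S : Set α) (F : Finset ι) :
    (admissible R (S ∩ f ⁻¹' F)).ncard = ∏ i ∈ F, (admissible R (S ∩ f ⁻¹' {i})).ncard := by
  induction F using Finset.induction_on with
  | empty => simp [admissible_empty]
  | insert i F hi ih =>
    rw [Finset.prod_insert hi, ← ih,
      ncard_admissible_eq_mul (P := f ⁻¹' {i}) fun x y h => by simp [hR x y h]]
    congr 3 <;> ext x <;> by_cases hx : f x = i <;> simp [hx, hi]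

end General

def IsStep (d u x y : ℕ) : Prop :=
  y + d = x ∨ y = x ∨ y = x + u

def downCycle (a j : ℕ) : Perm ℕ where
  toFun x := if x = a then a + j else if a < x ∧ x ≤ a + j then x - 1 else x
  invFun x := if x = a + j then a else if a ≤ x ∧ x < a + j then x + 1 else x
  left_inv x := by dsimp only; split_ifs <;> omega
  right_inv x := by dsimp only; split_ifs <;> omega

lemma downCycle_apply (a j x : ℕ) :
    downCycle a j x = if x = a then a + j else if a < x ∧ x ≤ a + j then x - 1 else x := rfl

lemma downCycle_inv_apply (a j x : ℕ) :
    (downCycle a j)⁻¹ x = if x = a + j then a else if a ≤ x ∧ x < a + j then x + 1 else x := rfl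

section Line

variable {j a L : ℕ} {π : Perm ℕ}

lemma apply_eq_add_of_apply_ne (hπ : π ∈ admissible (IsStep 1 j) (Set.Ico a (a + L)))
    (ha : π a ≠ a) :
    π a = a + j ∧ j < L := by
  have haS : a ∈ Set.Ico a (a + L) := by_contra fun h => ha (hπ.1 a h)
  have hπa := (apply_mem_iff_of_fixes hπ.1 a).2 haS
  simp only [Set.mem_Ico] at haS hπa
  rcases hπ.2 a ⟨haS.1, haS.2⟩ with h | h | h <;> omega

lemma apply_add_add_one_of_apply_eq_add (hπ : π ∈ admissible (IsStep 1 j) (Set.Ico a (a + L)))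
    (ha : π a = a + j) {k : ℕ} (hk : k < j) : π (a + k + 1) = a + k := by
  have hjL : j < L := (apply_eq_add_of_apply_ne hπ (by omega)).2
  have key : ∀ k < j, π (a + k) ≠ a + k → π (a + k + 1) = a + k := by
    intro k hk hne
    -- the preimage `x` of `a + k` is not `a + k` (by `hne`) and cannot lie `j` below it
    obtain ⟨x, hx⟩ := π.surjective (a + k)
    have hxS : x ∈ Set.Ico a (a + L) := by
      rw [← apply_mem_iff_of_fixes hπ.1, hx, Set.mem_Ico]
      omega
    rcases hπ.2 x hxS with h | h | h
    · rwa [show a + k + 1 = x by omega]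
    · exact absurd (show x = a + k by omega ▸ hx) hne
    · simp only [Set.mem_Ico] at hxS; omega
  induction k with
  | zero => exact key 0 hk (by rw [add_zero, ha]; omega)
  | succ k ih => exact key (k + 1) hk (by rw [← add_assoc, ih (by omega)]; omega)

lemma mul_downCycle_mem_admissible_iff {n : ℕ} (hj : 1 ≤ j) (hjn : j ≤ n) {σ : Perm ℕ} :
    σ * downCycle a j ∈ admissible (IsStep 1 j) (Set.Ico a (a + (n + 1))) ∧
      (σ * downCycle a j) a ≠ a ↔
    σ ∈ admissible (IsStep 1 j) (Set.Ico (a + j + 1) (a + j + 1 + (n - j))) := by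
  constructor
  · rintro ⟨hπ, hne⟩
    have ha := (apply_eq_add_of_apply_ne hπ hne).1
    have hσ : ∀ x, σ x = (σ * downCycle a j) ((downCycle a j)⁻¹ x) := fun x => by simp
    refine ⟨fun x hx => ?_, fun x hx => ?_⟩ <;> rw [hσ, downCycle_inv_apply] <;>
      simp only [Set.mem_Ico, not_and_or, not_le, not_lt] at hx
    · split_ifs with h1 h2
      · rw [ha, h1]
      · rw [show x + 1 = a + (x - a) + 1 by omega,
          apply_add_add_one_of_apply_eq_add hπ ha (by omega)]
        omega
      · exact hπ.1 x (by simp only [Set.mem_Ico]; omega)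
    · rw [if_neg (by omega), if_neg (by omega)]
      exact hπ.2 x (by simp only [Set.mem_Ico]; omega)
  · intro hσ
    have hσc : ∀ x, (σ * downCycle a j) x = σ (downCycle a j x) := fun x => rfl
    refine ⟨⟨fun x hx => ?_, fun x hx => ?_⟩, ?_⟩ <;> rw [hσc, downCycle_apply]
    · simp only [Set.mem_Ico, not_and_or, not_le, not_lt] at hx
      rw [if_neg (by omega), if_neg (by omega)]
      exact hσ.1 x (by simp only [Set.mem_Ico]; omega)
    · simp only [Set.mem_Ico] at hx
      split_ifs with h1 h2
      · rw [hσ.1 _ (by simp only [Set.mem_Ico]; omega)]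
        right; right; rw [h1]
      · rw [hσ.1 _ (by simp only [Set.mem_Ico]; omega)]
        left; omega
      · exact hσ.2 x (by simp only [Set.mem_Ico]; omega)
    · rw [if_pos rfl, hσ.1 _ (by simp only [Set.mem_Ico]; omega)]
      omega

lemma admissible_Ico_sdiff_fixed_eq_image {n : ℕ} (hj : 1 ≤ j) (hjn : j ≤ n) :
    admissible (IsStep 1 j) (Set.Ico a (a + (n + 1))) \ {π | π a = a} =
      (· * downCycle a j) ''
        admissible (IsStep 1 j) (Set.Ico (a + j + 1) (a + j + 1 + (n - j))) := by
  ext π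
  refine ⟨fun hπ => ⟨π * (downCycle a j)⁻¹, ?_, inv_mul_cancel_right _ _⟩, ?_⟩
  · exact (mul_downCycle_mem_admissible_iff hj hjn).1 (by simpa using hπ)
  · rintro ⟨σ, hσ, rfl⟩
    exact (mul_downCycle_mem_admissible_iff hj hjn).2 hσ

theorem ncard_admissible_Ico (hj : 1 ≤ j) (L a : ℕ) :
    (admissible (IsStep 1 j) (Set.Ico a (a + L))).ncard = bonacci (j + 1) L := by
  induction L using Nat.strong_induction_on generalizing a with
  | _ L ih =>
  rcases L with _ | n
  · rw [add_zero, Set.Ico_self, admissible_empty, Set.ncard_singleton, bonacci_zero]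
  have hIco : Set.Ico a (a + (n + 1)) = insert a (Set.Ico (a + 1) (a + 1 + n)) := by
    ext; simp only [Set.mem_Ico, Set.mem_insert_iff]; omega
  have hfixed : admissible (IsStep 1 j) (Set.Ico a (a + (n + 1))) ∩ {π | π a = a} =
      admissible (IsStep 1 j) (Set.Ico (a + 1) (a + 1 + n)) := by
    rw [hIco]
    exact admissible_insert_inter_fixed (by simp) (Or.inr (Or.inl rfl))
  set A := admissible (IsStep 1 j) (Set.Ico a (a + (n + 1)))
  have hmoved : (A \ {π | π a = a}).ncard = if j ≤ n then bonacci (j + 1) (n - j) else 0 := by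
    split_ifs with hjn
    · rw [admissible_Ico_sdiff_fixed_eq_image hj hjn,
        Set.ncard_image_of_injective _ (mul_left_injective _), ih _ (by omega)]
    · have hA : A \ {π | π a = a} = ∅ := Set.eq_empty_of_forall_notMem fun π hπ => by
        have := (apply_eq_add_of_apply_ne hπ.1 hπ.2).2
        omega
      rw [hA, Set.ncard_empty]
  rw [← Set.ncard_inter_add_ncard_sdiff_eq_ncard A _ (finite_admissible _ (Set.finite_Ico _ _)),
    hfixed, ih n (by omega), hmoved, bonacci_succ_add_one]

end Line

section Residues

variable {m j : ℕ}

lemma isStep_iff_int {d u x y : ℕ} :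
    IsStep d u x y ↔ (y : ℤ) - x = -(d : ℤ) ∨ (y : ℤ) - x = 0 ∨ (y : ℤ) - x = u := by
  unfold IsStep
  omega

lemma isStep_add_one_iff {d u x y : ℕ} : IsStep d u (x + 1) (y + 1) ↔ IsStep d u x y := by
  unfold IsStep
  omega

lemma isStep_add_mul_iff (hm : 0 < m) (ρ k l : ℕ) :
    IsStep m (j * m) (ρ + k * m) (ρ + l * m) ↔ IsStep 1 j k l := by
  simp only [IsStep, add_assoc, add_right_inj, ← add_one_mul, ← add_mul,
    mul_left_inj' hm.ne']

lemma IsStep.mod_eq {x y : ℕ} (h : IsStep m (j * m) x y) : y % m = x % m := by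
  rcases h with h | h | h <;> subst h
  exacts [(Nat.add_mod_right _ _).symm, rfl, Nat.add_mul_mod_self_right _ _ _]

lemma Iio_inter_mod_eq_image {i r ρ : ℕ} (hrm : r ≤ m) (hρ : ρ < m) :
    Set.Iio (i * m + r) ∩ (· % m) ⁻¹' {ρ} =
      (fun k => ρ + k * m) '' Set.Iio (if ρ < r then i + 1 else i) := by
  have hℓ : (if ρ < r then i + 1 else i) * m = if ρ < r then i * m + m else i * m := by
    split_ifs <;> ring
  ext x
  simp only [Set.mem_inter_iff, Set.mem_Iio, Set.mem_preimage, Set.mem_singleton_iff,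
    Set.mem_image]
  constructor
  · rintro ⟨hx, rfl⟩
    refine ⟨x / m, Nat.lt_of_mul_lt_mul_right (a := m) ?_, Nat.mod_add_div' x m⟩
    have := Nat.mod_add_div' x m
    split_ifs at hℓ ⊢ <;> omega
  · rintro ⟨k, hk, rfl⟩
    refine ⟨?_, by rw [Nat.add_mul_mod_self_right, Nat.mod_eq_of_lt hρ]⟩
    have := Nat.mul_le_mul_right m (Nat.succ_le_of_lt hk)
    rw [Nat.succ_mul] at this
    split_ifs at hℓ this <;> omega

lemma ncard_admissible_residue {i r ρ : ℕ} (hm : 0 < m) (hj : 1 ≤ j) (hrm : r ≤ m) (hρ : ρ < m) :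
    (admissible (IsStep m (j * m)) (Set.Iio (i * m + r) ∩ (· % m) ⁻¹' {ρ})).ncard =
      bonacci (j + 1) (if ρ < r then i + 1 else i) := by
  have hinj : Injective fun k => ρ + k * m := fun k l h =>
    Nat.eq_of_mul_eq_mul_right hm (by simpa using h)
  rw [Iio_inter_mod_eq_image hrm hρ,
    ncard_admissible_image hinj fun k _ l _ => isStep_add_mul_iff hm ρ k l,
    ← ncard_admissible_Ico hj _ 0, zero_add]
  congr 2
  ext
  simp

lemma ncard_admissible_Iio {i r : ℕ} (hm : 0 < m) (hj : 1 ≤ j) (hrm : r ≤ m) :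
    (admissible (IsStep m (j * m)) (Set.Iio (i * m + r))).ncard =
      bonacci (j + 1) (i + 1) ^ r * bonacci (j + 1) i ^ (m - r) := by
  have hS : Set.Iio (i * m + r) = Set.Iio (i * m + r) ∩ (· % m) ⁻¹' ↑(Finset.range m) := by
    ext x
    simp [Nat.mod_lt x hm]
  have hlow : ∀ ρ ∈ Finset.range r,
      (admissible (IsStep m (j * m)) (Set.Iio (i * m + r) ∩ (· % m) ⁻¹' {ρ})).ncard =
        bonacci (j + 1) (i + 1) := fun ρ hρ => by
    rw [Finset.mem_range] at hρ
    rw [ncard_admissible_residue hm hj hrm (hρ.trans_le hrm), if_pos hρ]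
  have hhigh : ∀ ρ ∈ Finset.Ico r m,
      (admissible (IsStep m (j * m)) (Set.Iio (i * m + r) ∩ (· % m) ⁻¹' {ρ})).ncard =
        bonacci (j + 1) i := fun ρ hρ => by
    rw [Finset.mem_Ico] at hρ
    rw [ncard_admissible_residue hm hj hrm hρ.2, if_neg hρ.1.not_gt]
  rw [hS, ncard_admissible_eq_prod _ fun x y h => h.mod_eq, ← Finset.prod_range_mul_prod_Ico _ hrm,
    Finset.prod_congr rfl hlow, Finset.prod_congr rfl hhigh, Finset.prod_const, Finset.prod_const,
    Finset.card_range, Nat.card_Ico]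

end Residues

end RestrictedPerm

open RestrictedPerm

/-- the number of permutations `π` of `{1,…,im+r}` with
`π(s)-s ∈ {-m,0,jm}` equals `(f^{(j+1)}_i)^{m-r} (f^{(j+1)}_{i+1})^r`. -/
theorem stmt_8 (m j i r : ℕ) (hm : 1 ≤ m) (hj : 1 ≤ j) (hr : r ≤ m - 1) :
    Nat.card {π : Equiv.Perm ℕ //
        (∀ x : ℕ, x ∉ Finset.Icc 1 (i * m + r) → π x = x) ∧
        (∀ s ∈ Finset.Icc 1 (i * m + r),
          (π s : ℤ) - s = -(m : ℤ) ∨ (π s : ℤ) - s = 0 ∨ (π s : ℤ) - s = (j : ℤ) * m)} =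
      bonacci (j + 1) i ^ (m - r) * bonacci (j + 1) (i + 1) ^ r := by
  -- shifted down by one, the residue class of `ρ` starts at `ρ` itself
  have hIcc : ((Finset.Icc 1 (i * m + r) : Finset ℕ) : Set ℕ) = (· + 1) '' Set.Iio (i * m + r) := by
    ext x
    simp only [Finset.coe_Icc, Set.mem_Icc, Set.mem_image, Set.mem_Iio]
    exact ⟨fun hx => ⟨x - 1, by omega, by omega⟩, by rintro ⟨y, hy, rfl⟩; omega⟩
  rw [mul_comm (bonacci _ i ^ _), ← ncard_admissible_Iio (by omega) hj (by omega),
    ← ncard_admissible_image (add_left_injective 1) fun _ _ _ _ => isStep_add_one_iff, ← hIcc]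
  exact Nat.card_congr (Equiv.subtypeEquivRight fun π => by
    simp only [admissible, Finset.mem_coe, isStep_iff_int, Nat.cast_mul, Set.mem_ofPred_eq])
end

section
/- Let q ≥ 2 and p be integers with 1 ≤ p ≤ q−1 and 2p > q, and let Q = {1,…,q} \ {p}. Then for every n ≥ 0, the number of subsets S of {1,…,n} such that no two elements of S differ by an element of Q equals the number of compositions of n+q into parts from the infinite set {1} ∪ { q+1+jp : j = 0, 1, 2, … }. -/
open Finset

section DiffFree

def DiffFree (Q s : Finset ℕ) : Prop := ∀ a ∈ s, ∀ b ∈ s, b < a → a - b ∉ Q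

instance (Q s : Finset ℕ) : Decidable (DiffFree Q s) :=
  inferInstanceAs (Decidable (∀ a ∈ s, ∀ b ∈ s, b < a → a - b ∉ Q))

def diffFreeSets (Q : Finset ℕ) (n : ℕ) : Finset (Finset ℕ) :=
  (Icc 1 n).powerset.filter (DiffFree Q)

variable {Q : Finset ℕ}

theorem restrictedCount_eq_card (Q : Finset ℕ) (n : ℕ) :
    restrictedCount Q n = (diffFreeSets Q n).card := rfl

theorem DiffFree.mono {s t : Finset ℕ} (hs : DiffFree Q s) (hts : t ⊆ s) : DiffFree Q t :=
  fun a ha b hb => hs a (hts ha) b (hts hb)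

theorem diffFree_insert {a : ℕ} {s : Finset ℕ} (hs : ∀ b ∈ s, b < a) :
    DiffFree Q (insert a s) ↔ DiffFree Q s ∧ ∀ b ∈ s, a - b ∉ Q := by
  simp only [DiffFree, forall_mem_insert, lt_irrefl, false_imp_iff, true_and]
  constructor
  · rintro ⟨hab, hs'⟩
    exact ⟨fun c hc b hb => (hs' c hc).2 b hb, fun b hb => hab b hb (hs b hb)⟩
  · rintro ⟨hs', hab⟩
    exact ⟨fun b hb _ => hab b hb, fun c hc => ⟨fun h => absurd h (hs c hc).not_gt, hs' c hc⟩⟩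

theorem mem_diffFreeSets {n : ℕ} {s : Finset ℕ} :
    s ∈ diffFreeSets Q n ↔ (∀ b ∈ s, 1 ≤ b ∧ b ≤ n) ∧ DiffFree Q s := by
  simp [diffFreeSets, subset_iff]

theorem diffFreeSets_eq_filter_of_le {m n : ℕ} (hmn : m ≤ n) :
    diffFreeSets Q m = (diffFreeSets Q n).filter fun s => ∀ b ∈ s, b ≤ m := by
  ext s
  simp only [mem_filter, mem_diffFreeSets]
  constructor
  · rintro ⟨hs, hfree⟩
    exact ⟨⟨fun b hb => ⟨(hs b hb).1, (hs b hb).2.trans hmn⟩, hfree⟩, fun b hb => (hs b hb).2⟩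
  · rintro ⟨⟨hs, hfree⟩, hm⟩
    exact ⟨fun b hb => ⟨(hs b hb).1, hm b hb⟩, hfree⟩

theorem card_diffFreeSets_zero : (diffFreeSets Q 0).card = 1 := rfl

theorem card_diffFreeSets_succ (n : ℕ) :
    (diffFreeSets Q (n + 1)).card =
      (diffFreeSets Q n).card + ((diffFreeSets Q (n + 1)).filter (n + 1 ∈ ·)).card := by
  rw [← card_filter_add_card_filter_not (p := (n + 1 ∈ ·)), add_comm,
    diffFreeSets_eq_filter_of_le n.le_succ]
  congr 2
  refine filter_congr fun s hs => ?_
  have hs := (mem_diffFreeSets.1 hs).1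
  exact ⟨fun h b hb => Nat.le_of_lt_succ ((hs b hb).2.lt_of_ne fun hb' => h (hb' ▸ hb)),
    fun h hn => Nat.not_succ_le_self n (h _ hn)⟩

theorem card_filter_mem_diffFreeSets_succ (n : ℕ) :
    ((diffFreeSets Q (n + 1)).filter (n + 1 ∈ ·)).card =
      ((diffFreeSets Q n).filter fun t => ∀ b ∈ t, n + 1 - b ∉ Q).card := by
  refine card_nbij' (·.erase (n + 1)) (insert (n + 1)) ?_ ?_ ?_ ?_
  · intro s hs
    simp only [coe_filter, mem_diffFreeSets] at hs ⊢
    obtain ⟨⟨hs, hfree⟩, hn⟩ := hs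
    have hlt : ∀ b ∈ s.erase (n + 1), b < n + 1 := fun b hb =>
      (hs b (mem_of_mem_erase hb)).2.lt_of_ne (ne_of_mem_erase hb)
    refine ⟨⟨fun b hb => ⟨(hs b (mem_of_mem_erase hb)).1, Nat.le_of_lt_succ (hlt b hb)⟩,
      hfree.mono (erase_subset _ _)⟩, fun b hb => ?_⟩
    exact hfree _ hn _ (mem_of_mem_erase hb) (hlt b hb)
  · intro t ht
    simp only [coe_filter, mem_diffFreeSets] at ht ⊢
    obtain ⟨⟨ht, hfree⟩, hn⟩ := ht
    refine ⟨⟨fun b hb => ?_, (diffFree_insert fun b hb => ?_).2 ⟨hfree, hn⟩⟩, mem_insert_self _ _⟩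
    · rcases mem_insert.1 hb with rfl | hb
      · omega
      · exact ⟨(ht b hb).1, (ht b hb).2.trans n.le_succ⟩
    · exact Nat.lt_succ_of_le (ht b hb).2
  · intro s hs
    exact insert_erase (mem_filter.1 hs).2
  · intro t ht
    refine erase_insert fun hn => ?_
    have := ((mem_diffFreeSets.1 (mem_filter.1 ht).1).1 _ hn).2
    omega

end DiffFree

section ErasedInterval

variable {q p : ℕ}

theorem card_filter_mem_diffFreeSets_erase_succ (hp : 0 < p) (hpq : p ≤ q) (hq : q < 2 * p)
    (n : ℕ) :
    ((diffFreeSets ((Icc 1 q).erase p) (n + 1)).filter (n + 1 ∈ ·)).card =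
      ((diffFreeSets ((Icc 1 q).erase p) (n + 1 - p)).filter (n + 1 - p ∈ ·)).card +
        (diffFreeSets ((Icc 1 q).erase p) (n - q)).card := by
  set Q := (Icc 1 q).erase p
  have hQ : ∀ d, d ∉ Q ↔ d = 0 ∨ q < d ∨ d = p := by
    intro d
    simp only [Q, mem_erase, mem_Icc]
    omega
  have hgap : ∀ t ∈ diffFreeSets Q n,
      (∀ b ∈ t, n + 1 - b ∉ Q) ↔ ∀ b ∈ t, b = n + 1 - p ∨ b ≤ n - q := by
    intro t ht
    refine forall₂_congr fun b hb => ?_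
    have := (mem_diffFreeSets.1 ht).1 b hb
    rw [hQ]
    omega
  rw [card_filter_mem_diffFreeSets_succ, filter_congr hgap,
    ← card_filter_add_card_filter_not (p := (n + 1 - p ∈ ·)), filter_filter, filter_filter,
    diffFreeSets_eq_filter_of_le (n := n) (n.sub_le q),
    diffFreeSets_eq_filter_of_le (m := n + 1 - p) (n := n) (by omega), filter_filter]
  congr 1
  · refine congrArg card (filter_congr fun t ht => ?_)
    have hfree := (mem_diffFreeSets.1 ht).2
    constructor
    · rintro ⟨hle, hm⟩
      exact ⟨fun b hb => by have := hle b hb; omega, hm⟩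
    · rintro ⟨hle, hm⟩
      refine ⟨fun b hb => ?_, hm⟩
      rcases (hle b hb).eq_or_lt with h | h
      · exact Or.inl h
      · have := (hQ _).1 (hfree _ hm b hb h)
        omega
  · refine congrArg card (filter_congr fun t ht => ?_)
    have hbounds := (mem_diffFreeSets.1 ht).1
    constructor
    · rintro ⟨hle, hm⟩ b hb
      have : b ≠ n + 1 - p := fun h => hm (h ▸ hb)
      have := hle b hb
      omega
    · intro hle
      refine ⟨fun b hb => Or.inr (hle b hb), fun hm => ?_⟩
      have := hle _ hm
      have := hbounds _ hm
      omega

end ErasedInterval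

theorem List.modifyHead_injective {α : Type*} {f : α → α} (hf : Function.Injective f) :
    Function.Injective (List.modifyHead f) := by
  rintro (_ | ⟨a, s⟩) (_ | ⟨b, t⟩) h <;> simp_all [hf.eq_iff]

section Compositions

variable (q p : ℕ)

def IsBigPart (x : ℕ) : Prop := ∃ j, x = q + 1 + j * p

def compositions (m : ℕ) : Set (List ℕ) :=
  {L | (∀ x ∈ L, x = 1 ∨ IsBigPart q p x) ∧ L.sum = m}

def compositionsBigHead (m : ℕ) : Set (List ℕ) :=
  {L ∈ compositions q p m | ∃ x ∈ L.head?, IsBigPart q p x}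

variable {q p}

theorem compositions_subset_range_blocks (m : ℕ) :
    compositions q p m ⊆ Set.range (Composition.blocks : Composition m → List ℕ) := by
  rintro L ⟨hL, hsum⟩
  refine ⟨⟨L, fun {x} hx => ?_, hsum⟩, rfl⟩
  rcases hL x hx with rfl | ⟨j, rfl⟩ <;> omega

theorem compositions_finite (m : ℕ) : (compositions q p m).Finite :=
  (Set.finite_range _).subset (compositions_subset_range_blocks m)

theorem compositionsBigHead_finite (m : ℕ) : (compositionsBigHead q p m).Finite :=
  (compositions_finite m).subset (Set.sep_subset _ _)

theorem compositions_zero : compositions q p 0 = {[]} := by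
  ext (_ | ⟨x, t⟩)
  · simp [compositions]
  · simp only [compositions, List.mem_cons, forall_eq_or_imp, List.sum_cons, Set.mem_ofPred_eq,
      Set.mem_singleton_iff, reduceCtorEq, iff_false, not_and]
    rintro ⟨rfl | ⟨j, rfl⟩, -⟩ <;> omega

theorem compositionsBigHead_eq_empty {m : ℕ} (hm : m ≤ q) : compositionsBigHead q p m = ∅ := by
  refine Set.eq_empty_of_forall_notMem ?_
  rintro (_ | ⟨x, t⟩) ⟨⟨-, hsum⟩, y, hy, j, rfl⟩
  · simp at hy
  simp only [List.head?_cons, Option.mem_def, Option.some.injEq] at hy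
  simp only [List.sum_cons] at hsum
  omega

theorem compositions_succ (m : ℕ) :
    compositions q p (m + 1) =
      List.cons 1 '' compositions q p m ∪ compositionsBigHead q p (m + 1) := by
  ext (_ | ⟨x, t⟩)
  · simp [compositions, compositionsBigHead]
  · simp only [compositions, Set.mem_ofPred_eq, List.mem_cons, forall_eq_or_imp, List.sum_cons,
      compositionsBigHead, Option.mem_def, Set.mem_union, Set.mem_image, List.cons.injEq,
      exists_eq_right_right, List.head?_cons, Option.some.injEq, exists_eq_left']
    constructor
    · rintro ⟨⟨rfl | hx, ht⟩, hsum⟩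
      · exact Or.inl ⟨⟨ht, by omega⟩, rfl⟩
      · exact Or.inr ⟨⟨⟨Or.inr hx, ht⟩, hsum⟩, hx⟩
    · rintro (⟨⟨ht, hsum⟩, rfl⟩ | ⟨h, -⟩)
      · exact ⟨⟨Or.inl rfl, ht⟩, by omega⟩
      · exact h

theorem compositionsBigHead_succ_add (n : ℕ) :
    compositionsBigHead q p (n + 1 + q) =
      List.cons (q + 1) '' compositions q p n ∪
        List.modifyHead (· + p) '' compositionsBigHead q p (n + 1 - p + q) := by
  ext (_ | ⟨x, t⟩)
  · simp [compositions, compositionsBigHead]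
  · simp only [compositionsBigHead, compositions, Set.mem_ofPred_eq, Option.mem_def,
      List.mem_cons, forall_eq_or_imp, List.sum_cons, List.head?_cons, Option.some.injEq,
      exists_eq_left', Set.mem_union, Set.mem_image, List.cons.injEq, exists_eq_right_right]
    constructor
    · rintro ⟨⟨⟨-, ht⟩, hsum⟩, _ | j, rfl⟩
      · exact Or.inl ⟨⟨ht, by omega⟩, by ring⟩
      · refine Or.inr ⟨(q + 1 + j * p) :: t, ⟨⟨?_, ?_⟩, _, rfl, j, rfl⟩, ?_⟩
        · exact fun y hy => (List.mem_cons.1 hy).elim (fun h => Or.inr ⟨j, h⟩) (ht y)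
        · rw [add_one_mul] at hsum
          simp only [List.sum_cons]
          omega
        · simp only [List.modifyHead_cons, List.cons.injEq, and_true]
          ring
    · rintro (⟨⟨ht, hsum⟩, rfl⟩ | ⟨_ | ⟨y, s⟩, ⟨⟨hs, hsum⟩, _, hy, j, rfl⟩, heq⟩)
      · exact ⟨⟨⟨Or.inr ⟨0, by ring⟩, ht⟩, by omega⟩, 0, by ring⟩
      · simp at hy
      simp only [List.head?_cons, Option.some.injEq, List.modifyHead_cons,
        List.cons.injEq] at hy heq
      obtain ⟨rfl, rfl⟩ := heq
      subst hy
      simp only [List.mem_cons, forall_eq_or_imp, List.sum_cons] at hs hsum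
      exact ⟨⟨⟨Or.inr ⟨j + 1, by ring⟩, hs.2⟩, by omega⟩, j + 1, by ring⟩

theorem ncard_compositions_succ (hq : 0 < q) (m : ℕ) :
    (compositions q p (m + 1)).ncard =
      (compositions q p m).ncard + (compositionsBigHead q p (m + 1)).ncard := by
  have hdisj : Disjoint (List.cons 1 '' compositions q p m) (compositionsBigHead q p (m + 1)) := by
    refine Set.disjoint_left.2 ?_
    rintro _ ⟨L, -, rfl⟩ ⟨-, x, hx, j, rfl⟩
    simp only [List.head?_cons, Option.mem_def, Option.some.injEq] at hx
    omega
  rw [compositions_succ, Set.ncard_union_eq hdisj ((compositions_finite m).image _)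
    (compositionsBigHead_finite _), Set.ncard_image_of_injective _ List.cons_injective]

theorem ncard_compositionsBigHead_succ_add (hp : 0 < p) (n : ℕ) :
    (compositionsBigHead q p (n + 1 + q)).ncard =
      (compositions q p n).ncard + (compositionsBigHead q p (n + 1 - p + q)).ncard := by
  have hdisj : Disjoint (List.cons (q + 1) '' compositions q p n)
      (List.modifyHead (· + p) '' compositionsBigHead q p (n + 1 - p + q)) := by
    refine Set.disjoint_left.2 ?_
    rintro _ ⟨L, -, rfl⟩ ⟨_ | ⟨y, s⟩, ⟨-, x, hx, j, rfl⟩, heq⟩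
    · simp at hx
    simp only [List.head?_cons, Option.mem_def, Option.some.injEq, List.modifyHead_cons,
      List.cons.injEq] at hx heq
    omega
  rw [compositionsBigHead_succ_add, Set.ncard_union_eq hdisj ((compositions_finite n).image _)
    ((compositionsBigHead_finite _).image _),
    Set.ncard_image_of_injective _ List.cons_injective,
    Set.ncard_image_of_injective _ (List.modifyHead_injective (add_left_injective p))]

theorem ncard_compositions_of_le {m : ℕ} (hm : m ≤ q) : (compositions q p m).ncard = 1 := by
  induction m with
  | zero => rw [compositions_zero, Set.ncard_singleton]
  | succ m ih =>
    rw [ncard_compositions_succ (by omega), ih (by omega), compositionsBigHead_eq_empty hm,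
      Set.ncard_empty]

end Compositions

theorem card_diffFreeSets_erase_eq_ncard_compositions {q p : ℕ} (hpq : p ≤ q) (hq : q < 2 * p)
    (n : ℕ) :
    (diffFreeSets ((Icc 1 q).erase p) n).card = (compositions q p (n + q)).ncard ∧
      ((diffFreeSets ((Icc 1 q).erase p) n).filter (n ∈ ·)).card =
        (compositionsBigHead q p (n + q)).ncard := by
  have hp : 0 < p := by omega
  induction n using Nat.strong_induction_on with
  | _ n ih =>
    rcases n with _ | k
    · rw [compositionsBigHead_eq_empty (by omega), ncard_compositions_of_le (by omega),
        card_diffFreeSets_zero]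
      exact ⟨rfl, by simp [diffFreeSets]⟩
    have hfree :
        (diffFreeSets ((Icc 1 q).erase p) (k - q)).card = (compositions q p k).ncard := by
      rcases le_or_gt q k with hk | hk
      · simpa only [Nat.sub_add_cancel hk] using (ih (k - q) (by omega)).1
      · rw [Nat.sub_eq_zero_of_le hk.le, card_diffFreeSets_zero, ncard_compositions_of_le hk.le]
    have htop : ((diffFreeSets ((Icc 1 q).erase p) (k + 1)).filter (k + 1 ∈ ·)).card =
        (compositionsBigHead q p (k + 1 + q)).ncard := by
      rw [card_filter_mem_diffFreeSets_erase_succ hp hpq hq, ncard_compositionsBigHead_succ_add hp,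
        (ih _ (by omega)).2, hfree, add_comm]
    refine ⟨?_, htop⟩
    rw [card_diffFreeSets_succ, htop, (ih k (by omega)).1, show k + 1 + q = k + q + 1 by omega,
      ncard_compositions_succ (by omega)]

theorem stmt_12_general (q p : ℕ) (hp2 : p ≤ q - 1)
    (hpq : q < 2 * p) (n : ℕ) :
    restrictedCount ((Finset.Icc 1 q).filter fun x => x ≠ p) n =
      Nat.card {L : List ℕ //
        (∀ x ∈ L, x = 1 ∨ ∃ j : ℕ, x = q + 1 + j * p) ∧ L.sum = n + q} := by
  rw [filter_ne', restrictedCount_eq_card,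
    (card_diffFreeSets_erase_eq_ncard_compositions (by omega) hpq n).1, ← Nat.card_coe_set_eq]
  rfl

/-- for `Q = {1,…,q} \ {p}` with `2p > q`, `S^Q_n` counts
compositions of `n+q` into parts from `{1} ∪ {q+1+jp : j ≥ 0}`. -/
theorem stmt_12 (q p : ℕ) (hq : 2 ≤ q) (hp1 : 1 ≤ p) (hp2 : p ≤ q - 1)
    (hpq : q < 2 * p) (n : ℕ) :
    restrictedCount ((Finset.Icc 1 q).filter fun x => x ≠ p) n =
      Nat.card {L : List ℕ //
        (∀ x ∈ L, x = 1 ∨ ∃ j : ℕ, x = q + 1 + j * p) ∧ L.sum = n + q} :=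
  stmt_12_general q p hp2 hpq n
end

section
/- For every n ≥ 0, the number of subsets S of {1,…,n} such that no two elements of S differ by 1 or by 3 (disallowed-differences set Q = {1,3}) equals the number of binary words of length n that contain neither the subword 00 nor the subword 0110 as a contiguous factor. -/
open Finset

theorem List.infix_iff_exists_getElem? {α : Type*} {u w : List α} (hu : u ≠ []) :
    u <:+: w ↔ ∃ k, ∀ i < u.length, w[k + i]? = u[i]? := by
  rw [List.infix_iff_getElem?]
  constructor
  · rintro ⟨k, -, h⟩
    exact ⟨k, fun i hi => by rw [add_comm, h i hi, List.getElem?_eq_getElem hi]⟩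
  · rintro ⟨k, h⟩
    have hlen : 0 < u.length := List.length_pos_iff.mpr hu
    have hlast := h (u.length - 1) (by omega)
    rw [List.getElem?_eq_getElem (l := u) (by omega)] at hlast
    obtain ⟨hlt, -⟩ := List.getElem?_eq_some_iff.mp hlast
    refine ⟨k, ?_, fun i hi => ?_⟩
    · omega
    · rw [add_comm, h i hi, List.getElem?_eq_getElem hi]

theorem List.pair_infix_iff {α : Type*} {a b : α} {w : List α} :
    [a, b] <:+: w ↔ ∃ k, w[k]? = some a ∧ w[k + 1]? = some b := by
  simp only [List.infix_iff_exists_getElem? (List.cons_ne_nil _ _), List.length_cons,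
    List.length_nil, Nat.forall_lt_succ_right, Nat.not_lt_zero]
  simp

theorem List.quad_infix_iff {α : Type*} {a b c d : α} {w : List α} :
    [a, b, c, d] <:+: w ↔
      ∃ k, w[k]? = some a ∧ w[k + 1]? = some b ∧ w[k + 2]? = some c ∧ w[k + 3]? = some d := by
  simp only [List.infix_iff_exists_getElem? (List.cons_ne_nil _ _), List.length_cons,
    List.length_nil, Nat.forall_lt_succ_right, Nat.not_lt_zero]
  simp [and_assoc]

theorem forall_sub_notMem_one_three_iff (s : Set ℕ) :
    (∀ a ∈ s, ∀ b ∈ s, b < a → a - b ∉ ({1, 3} : Finset ℕ)) ↔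
      (¬ ∃ b ∈ s, b + 1 ∈ s) ∧ ¬ ∃ b ∈ s, b + 1 ∉ s ∧ b + 2 ∉ s ∧ b + 3 ∈ s := by
  constructor
  · intro h
    refine ⟨fun ⟨b, hb, hb1⟩ => h _ hb1 _ hb (by omega) (by simp),
      fun ⟨b, hb, _, _, hb3⟩ => h _ hb3 _ hb (by omega) (by simp)⟩
  · rintro ⟨hno1, hno3⟩ a ha b hb hba hab
    simp only [Finset.mem_insert, Finset.mem_singleton] at hab
    rcases hab with hab | hab
    · exact hno1 ⟨b, hb, by rwa [show b + 1 = a by omega]⟩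
    · refine hno3 ⟨b, hb, fun hb1 => hno1 ⟨b, hb, hb1⟩, fun hb2 => hno1 ⟨b + 2, hb2, ?_⟩, ?_⟩ <;>
        rwa [show b + 3 = a by omega]

section subsetWord

variable {n : ℕ} {s : Finset ℕ}

def subsetWord (n : ℕ) (s : Finset ℕ) : List Bool :=
  (List.range n).map fun i => decide (i + 1 ∉ s)

@[simp]
theorem length_subsetWord : (subsetWord n s).length = n := by
  simp [subsetWord]

theorem getElem?_subsetWord_eq_some_false (hs : s ⊆ Icc 1 n) (i : ℕ) :
    (subsetWord n s)[i]? = some false ↔ i + 1 ∈ s := by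
  by_cases hi : i < n
  · simp [subsetWord, List.getElem?_range hi]
  · have : i + 1 ∉ s := fun h => hi (by have := mem_Icc.mp (hs h); omega)
    simp [subsetWord, hi, this]

theorem getElem?_subsetWord_eq_some_true (i : ℕ) :
    (subsetWord n s)[i]? = some true ↔ i < n ∧ i + 1 ∉ s := by
  by_cases hi : i < n <;> simp [subsetWord, hi]


theorem infix_00_subsetWord_iff (hs : s ⊆ Icc 1 n) :
    [false, false] <:+: subsetWord n s ↔ ∃ b ∈ s, b + 1 ∈ s := by
  simp only [List.pair_infix_iff, getElem?_subsetWord_eq_some_false hs]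
  constructor
  · rintro ⟨k, hk, hk1⟩
    exact ⟨k + 1, hk, hk1⟩
  · rintro ⟨b, hb, hb1⟩
    obtain ⟨k, rfl⟩ : ∃ k, b = k + 1 := ⟨b - 1, by have := (mem_Icc.mp (hs hb)).1; omega⟩
    exact ⟨k, hb, hb1⟩

theorem infix_0110_subsetWord_iff (hs : s ⊆ Icc 1 n) :
    [false, true, true, false] <:+: subsetWord n s ↔
      ∃ b ∈ s, b + 1 ∉ s ∧ b + 2 ∉ s ∧ b + 3 ∈ s := by
  simp only [List.quad_infix_iff, getElem?_subsetWord_eq_some_false hs,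
    getElem?_subsetWord_eq_some_true]
  constructor
  · rintro ⟨k, hk, ⟨-, hk1⟩, ⟨-, hk2⟩, hk3⟩
    exact ⟨k + 1, hk, hk1, hk2, hk3⟩
  · rintro ⟨b, hb, hb1, hb2, hb3⟩
    obtain ⟨k, rfl⟩ : ∃ k, b = k + 1 := ⟨b - 1, by have := (mem_Icc.mp (hs hb)).1; omega⟩
    have := (mem_Icc.mp (hs hb3)).2
    exact ⟨k, hb, ⟨by omega, hb1⟩, ⟨by omega, hb2⟩, hb3⟩

theorem subsetWord_avoids_iff (hs : s ⊆ Icc 1 n) :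
    (¬ [false, false] <:+: subsetWord n s ∧ ¬ [false, true, true, false] <:+: subsetWord n s) ↔
      ∀ a ∈ s, ∀ b ∈ s, b < a → a - b ∉ ({1, 3} : Finset ℕ) := by
  rw [infix_00_subsetWord_iff hs, infix_0110_subsetWord_iff hs]
  exact (forall_sub_notMem_one_three_iff s).symm

theorem subsetWord_injOn : Set.InjOn (subsetWord n) {s | s ⊆ Icc 1 n} := by
  intro s hs t ht hst
  ext k
  cases k with
  | zero => exact iff_of_false (fun h => by simpa using hs h) (fun h => by simpa using ht h)
  | succ i =>
    rw [← getElem?_subsetWord_eq_some_false hs, hst, getElem?_subsetWord_eq_some_false ht]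

theorem exists_subsetWord_eq {w : List Bool} (hw : w.length = n) :
    ∃ s ⊆ Icc 1 n, subsetWord n s = w := by
  subst hw
  refine ⟨(Icc 1 w.length).filter fun k => w[k - 1]? = some false, filter_subset _ _, ?_⟩
  refine List.ext_getElem (by simp) fun i hi hiw => ?_
  cases h : w[i] <;> simp [subsetWord, h, hiw]

end subsetWord

/-- `S^{{1,3}}_n` equals the number of binary words of length `n`
containing neither `00` nor `0110` as a contiguous factor (here `0 ↦ false`,
`1 ↦ true`). -/
theorem stmt_16 (n : ℕ) :
    restrictedCount {1, 3} n =
      Nat.card {w : List Bool // w.length = n ∧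
        ¬ [false, false] <:+: w ∧ ¬ [false, true, true, false] <:+: w} := by
  set F := (Icc 1 n).powerset.filter
    fun s => ∀ a ∈ s, ∀ b ∈ s, b < a → a - b ∉ ({1, 3} : Finset ℕ)
  have hwords : {w : List Bool | w.length = n ∧
      ¬ [false, false] <:+: w ∧ ¬ [false, true, true, false] <:+: w} = subsetWord n '' F := by
    ext w
    simp only [F, Set.mem_ofPred_eq, Set.mem_image, mem_coe, mem_filter, mem_powerset]
    constructor
    · rintro ⟨hlen, hw⟩
      obtain ⟨s, hs, rfl⟩ := exists_subsetWord_eq hlen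
      exact ⟨s, ⟨hs, (subsetWord_avoids_iff hs).mp hw⟩, rfl⟩
    · rintro ⟨s, ⟨hs, hQ⟩, rfl⟩
      exact ⟨length_subsetWord, (subsetWord_avoids_iff hs).mpr hQ⟩
  calc restrictedCount {1, 3} n = #F := rfl
    _ = (subsetWord n '' F).ncard := by
      rw [(subsetWord_injOn.mono fun s hs => mem_powerset.mp (mem_filter.mp hs).1).ncard_image,
        Set.ncard_coe_finset]
    _ = _ := by rw [← hwords]; rfl
end
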